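/- arXiv:2306.06890 — 8 statements merged into one kernel-verified Lean document; each statement's English description precedes it below -/
import Mathlib

section
/- Let m, k, ℓ be integers with 0 ≤ ℓ < k ≤ m/2 and let p be a prime. Let φ(x) ∈ ℤ[x] be a monic polynomial irreducible modulo p. Let f(x) ∈ ℤ[x] be a monic polynomial not divisible by φ(x), with φ-expansion f(x) = Σ_{i=0}^{m} f_i(x) φ(x)^i, where f_m(x) ≠ 0 and f_0(x) ≠ 0. Assume that v_p^x(f_i(x)) > 0 for all 0 ≤ i ≤ m−ℓ−1, and that for every 1 ≤ j ≤ m with f_j(x) ≠ 0 one has k·(v_p^x(f_0(x)) − v_p^x(f_j(x))) < j (i.e., the right-most edge of the φ-Newton polygon of f with respect to p has slope less than 1/k). Let a_0(x),…,a_m(x) ∈ ℤ[x] satisfy: (i) deg a_i(x) < deg φ(x) − deg f_i(x) for 0 ≤ i ≤ m; (ii) p does not divide the content of a_0(x); (iii) p does not divide the leading coefficient of a_m(x). Then the polynomial Σ_{i=0}^{m} a_i(x) f_i(x) φ(x)^i has no divisor in ℤ[x] whose degree d satisfies (ℓ+1)·deg φ ≤ d < (k+1)·deg φ. -/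
open Polynomial

open Finset

/-- The Gaussian valuation `v_p^x` on `ℤ[x]`: the minimum of the `p`-adic valuations of
the coefficients, i.e. the `p`-adic valuation of the content. -/
def vpx (p : ℕ) (f : Polynomial ℤ) : ℕ := padicValInt p f.content

namespace NPaux

noncomputable def fexp (φ : Polynomial ℤ) : Polynomial ℤ → ℕ → Polynomial ℤ
  | q, 0 => q %ₘ φ
  | q, (i+1) => fexp φ (q /ₘ φ) i

variable {φ : Polynomial ℤ}

@[simp] lemma fexp_zero_left : ∀ i, fexp φ 0 i = 0
  | 0 => by simp [fexp]
  | (i+1) => by simp [fexp, fexp_zero_left i]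

lemma fexp_zero (q : Polynomial ℤ) : fexp φ q 0 = q %ₘ φ := rfl

lemma fexp_succ (q : Polynomial ℤ) (i : ℕ) : fexp φ q (i+1) = fexp φ (q /ₘ φ) i := rfl

lemma degree_fexp_lt (hm : φ.Monic) : ∀ (i : ℕ) (q : Polynomial ℤ),
    (fexp φ q i).degree < φ.degree
  | 0, q => degree_modByMonic_lt q hm
  | (i+1), q => degree_fexp_lt hm i (q /ₘ φ)

lemma fexp_eq_zero (hm : φ.Monic) (hD : 0 < φ.natDegree) :
    ∀ (i : ℕ) (q : Polynomial ℤ), q.natDegree < i → fexp φ q i = 0 := by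
  intro i
  induction i with
  | zero => intro q h; exact absurd h (Nat.not_lt_zero _)
  | succ i ih =>
    intro q h
    rw [fexp_succ]
    by_cases hq : q /ₘ φ = 0
    · rw [hq, fexp_zero_left]
    · apply ih
      have h1 : natDegree (q /ₘ φ) = q.natDegree - φ.natDegree := natDegree_divByMonic q hm
      have h2 : 1 ≤ q.natDegree := by
        by_contra hc
        have hq0 : q.natDegree = 0 := by omega
        have : q.degree < φ.degree := by
          calc q.degree ≤ (q.natDegree : WithBot ℕ) := degree_le_natDegree
          _ = ((0:ℕ) : WithBot ℕ) := by rw [hq0]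
          _ < (φ.natDegree : WithBot ℕ) := by exact_mod_cast hD
          _ = φ.degree := (degree_eq_natDegree hm.ne_zero).symm
        exact hq ((divByMonic_eq_zero_iff hm).2 this)
      omega

lemma sum_fexp (hm : φ.Monic) (hD : 0 < φ.natDegree) :
    ∀ (N : ℕ) (q : Polynomial ℤ), q.natDegree < N →
      ∑ i ∈ range N, fexp φ q i * φ ^ i = q := by
  intro N
  induction N with
  | zero => intro q h; exact absurd h (Nat.not_lt_zero _)
  | succ N ih =>
    intro q h
    rw [Finset.sum_range_succ']
    simp only [fexp_succ, fexp_zero, pow_succ, pow_zero, one_mul]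
    have key : ∑ i ∈ range N, fexp φ (q /ₘ φ) i * (φ ^ i * φ) =
        (∑ i ∈ range N, fexp φ (q /ₘ φ) i * φ ^ i) * φ := by
      rw [Finset.sum_mul]; apply Finset.sum_congr rfl; intros; ring
    rw [key]
    by_cases hq : q /ₘ φ = 0
    · have := modByMonic_add_div q φ
      rw [hq] at this
      simp only [hq, fexp_zero_left, zero_mul, Finset.sum_const_zero]
      simpa using this
    · have h1 : natDegree (q /ₘ φ) = q.natDegree - φ.natDegree := natDegree_divByMonic q hm
      have h2 : natDegree (q /ₘ φ) < N := by
        have : φ.degree ≤ q.degree := by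
          by_contra hc
          exact hq ((divByMonic_eq_zero_iff hm).2 (lt_of_not_ge hc))
        have hq0 : q ≠ 0 := by
          intro h0; rw [h0, zero_divByMonic] at hq; exact hq rfl
        have : φ.natDegree ≤ q.natDegree := natDegree_le_natDegree this
        omega
      rw [ih _ h2]
      have := modByMonic_add_div q φ
      linear_combination this
lemma fexp_unique (hm : φ.Monic) :
    ∀ (N : ℕ) (c : ℕ → Polynomial ℤ) (q : Polynomial ℤ),
      (∀ i, (c i).degree < φ.degree) → q = ∑ i ∈ range N, c i * φ ^ i →
      ∀ i, fexp φ q i = if i < N then c i else 0 := by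
  intro N
  induction N with
  | zero =>
    intro c q _ hq i
    simp only [range_zero, Finset.sum_empty] at hq
    simp [hq, Nat.not_lt_zero]
  | succ N ih =>
    intro c q hdeg hq i
    have hq' : c 0 + φ * (∑ i ∈ range N, c (i+1) * φ ^ i) = q := by
      rw [hq, Finset.sum_range_succ']
      rw [Finset.mul_sum]
      simp only [pow_zero, mul_one]
      rw [add_comm]
      congr 1
      apply Finset.sum_congr rfl
      intros j _
      ring
    have huni := div_modByMonic_unique (∑ i ∈ range N, c (i+1) * φ ^ i) (c 0) hm
      ⟨hq', hdeg 0⟩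
    match i with
    | 0 =>
      rw [fexp_zero, huni.2]
      simp
    | (i+1) =>
      rw [fexp_succ, huni.1, ih (fun j => c (j+1)) _ (fun j => hdeg (j+1)) rfl i]
      by_cases hiN : i < N
      · rw [if_pos hiN, if_pos (by omega)]
      · rw [if_neg hiN, if_neg (by omega)]

lemma C_mul_modByMonic (hm : φ.Monic) (a : ℤ) (q : Polynomial ℤ) :
    (C a * q) %ₘ φ = C a * (q %ₘ φ) ∧ (C a * q) /ₘ φ = C a * (q /ₘ φ) := by
  have heq : C a * (q %ₘ φ) + φ * (C a * (q /ₘ φ)) = C a * q := by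
    have := modByMonic_add_div q φ
    linear_combination (C a) * this
  have hdeg : (C a * (q %ₘ φ)).degree < φ.degree := by
    calc (C a * (q %ₘ φ)).degree ≤ (C a).degree + (q %ₘ φ).degree := degree_mul_le _ _
      _ ≤ 0 + (q %ₘ φ).degree := add_le_add degree_C_le le_rfl
      _ = (q %ₘ φ).degree := zero_add _
      _ < φ.degree := degree_modByMonic_lt q hm
  have huni := div_modByMonic_unique (C a * (q /ₘ φ)) (C a * (q %ₘ φ)) hm ⟨heq, hdeg⟩
  exact ⟨huni.2, huni.1⟩

lemma Cdvd_modByMonic (hm : φ.Monic) {a : ℤ} {q : Polynomial ℤ} (h : C a ∣ q) :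
    C a ∣ q %ₘ φ ∧ C a ∣ q /ₘ φ := by
  obtain ⟨q', rfl⟩ := h
  rw [(C_mul_modByMonic hm a q').1, (C_mul_modByMonic hm a q').2]
  exact ⟨Dvd.intro _ rfl, Dvd.intro _ rfl⟩

lemma Cdvd_fexp (hm : φ.Monic) {a : ℤ} : ∀ (i : ℕ) {q : Polynomial ℤ}, C a ∣ q →
    C a ∣ fexp φ q i
  | 0, q, h => (Cdvd_modByMonic hm h).1
  | (i+1), q, h => Cdvd_fexp hm i ((Cdvd_modByMonic hm h).2)

lemma vpx_le_iff {p : ℕ} (hp : p.Prime) {q : Polynomial ℤ} (hq : q ≠ 0) {e : ℕ} :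
    C ((p:ℤ)^e) ∣ q ↔ e ≤ vpx p q := by
  haveI := Fact.mk hp
  rw [← dvd_content_iff_C_dvd, vpx, padicValInt_dvd_iff]
  simp [content_eq_zero_iff, hq]

lemma Cp_dvd_iff {p : ℕ} (hp : p.Prime) {q : Polynomial ℤ} (hq : q ≠ 0) :
    C ((p:ℤ)) ∣ q ↔ 1 ≤ vpx p q := by
  rw [← vpx_le_iff hp hq (e := 1), pow_one]

lemma vpx_mul {p : ℕ} (hp : p.Prime) {q r : Polynomial ℤ} (hq : q ≠ 0) (hr : r ≠ 0) :
    vpx p (q * r) = vpx p q + vpx p r := by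
  haveI := Fact.mk hp
  unfold vpx
  rw [content_mul, padicValInt.mul (by simpa [content_eq_zero_iff] using hq)
    (by simpa [content_eq_zero_iff] using hr)]

lemma map_eq_zero_iff_Cp {p : ℕ} (q : Polynomial ℤ) :
    q.map (Int.castRingHom (ZMod p)) = 0 ↔ C ((p:ℤ)) ∣ q := by
  rw [C_dvd_iff_dvd_coeff]
  constructor
  · intro h i
    have := congrArg (fun r => Polynomial.coeff r i) h
    simp only [coeff_map, coeff_zero] at this
    rw [← ZMod.intCast_zmod_eq_zero_iff_dvd]
    simpa only [eq_intCast] using this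
  · intro h
    ext i
    simp only [coeff_map, coeff_zero]
    rw [eq_intCast, ZMod.intCast_zmod_eq_zero_iff_dvd]
    exact h i

lemma exists_primitive {p : ℕ} (hp : p.Prime) {q : Polynomial ℤ} (hq : q ≠ 0) :
    ∃ q', q = C ((p:ℤ)^(vpx p q)) * q' ∧ ¬ C ((p:ℤ)) ∣ q' := by
  obtain ⟨q', hq'⟩ := (vpx_le_iff hp hq (e := vpx p q)).mpr le_rfl
  refine ⟨q', hq', fun hd => ?_⟩
  obtain ⟨q'', hq''⟩ := hd
  have : C ((p:ℤ)^(vpx p q + 1)) ∣ q :=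
    ⟨q'', by rw [pow_succ, C_mul, mul_assoc, ← hq'', ← hq']⟩
  have := (vpx_le_iff hp hq).mp this
  omega
lemma degree_div_lt' (hm : φ.Monic) (hD : 0 < φ.natDegree) {a b : Polynomial ℤ}
    (ha : a.degree < φ.degree) (hb : b.degree < φ.degree) :
    ((a * b) /ₘ φ).degree < φ.degree := by
  by_cases h0 : (a * b) /ₘ φ = 0
  · rw [h0, degree_zero]
    exact bot_lt_iff_ne_bot.2 (fun hb' => hm.ne_zero (degree_eq_bot.1 hb'))
  · have ha0 : a ≠ 0 := by
      rintro rfl; rw [zero_mul, zero_divByMonic] at h0; exact h0 rfl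
    have hb0 : b ≠ 0 := by
      rintro rfl; rw [mul_zero, zero_divByMonic] at h0; exact h0 rfl
    have ha' : a.natDegree < φ.natDegree := natDegree_lt_natDegree ha0 ha
    have hb' : b.natDegree < φ.natDegree := natDegree_lt_natDegree hb0 hb
    have h1 : ((a * b) /ₘ φ).natDegree = (a*b).natDegree - φ.natDegree :=
      natDegree_divByMonic _ hm
    have h2 : (a*b).natDegree ≤ a.natDegree + b.natDegree := natDegree_mul_le
    have h3 : ((a * b) /ₘ φ).natDegree < φ.natDegree := by omega
    calc ((a * b) /ₘ φ).degree ≤ (((a * b) /ₘ φ).natDegree : WithBot ℕ) := degree_le_natDegree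
      _ < (φ.natDegree : WithBot ℕ) := by exact_mod_cast h3
      _ = φ.degree := (degree_eq_natDegree hm.ne_zero).symm

lemma leading_aux (hm : φ.Monic) (hD : 0 < φ.natDegree) (c : ℕ → Polynomial ℤ) (m : ℕ)
    (hdeg : ∀ i, i ≤ m → (c i).degree < φ.degree) (hcm : c m ≠ 0) :
    (∑ i ∈ range (m+1), c i * φ ^ i).leadingCoeff = (c m).leadingCoeff ∧
      (∑ i ∈ range (m+1), c i * φ ^ i) ≠ 0 := by
  have hmain : degree (∑ i ∈ range m, c i * φ ^ i) < degree (c m * φ ^ m) := by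
    have hne : c m * φ ^ m ≠ 0 := mul_ne_zero hcm (pow_ne_zero _ hm.ne_zero)
    have hdcm : degree (c m * φ ^ m) = ((c m).natDegree + m * φ.natDegree : ℕ) := by
      rw [degree_eq_natDegree hne, natDegree_mul hcm (pow_ne_zero _ hm.ne_zero),
        natDegree_pow]
    have : ∀ i ∈ range m, degree (c i * φ ^ i) < ((m * φ.natDegree : ℕ) : WithBot ℕ) := by
      intro i hi
      rw [mem_range] at hi
      by_cases hci : c i = 0
      · rw [hci, zero_mul, degree_zero]; exact WithBot.bot_lt_coe _
      · have h1 : (c i).natDegree < φ.natDegree :=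
          natDegree_lt_natDegree hci (hdeg i (by omega))
        have h2 : (c i * φ ^ i).natDegree ≤ (c i).natDegree + i * φ.natDegree := by
          calc (c i * φ ^ i).natDegree ≤ (c i).natDegree + (φ^i).natDegree :=
              natDegree_mul_le
            _ = (c i).natDegree + i * φ.natDegree := by rw [natDegree_pow]
        calc (c i * φ ^ i).degree ≤ ((c i * φ ^ i).natDegree : WithBot ℕ) :=
            degree_le_natDegree
          _ < ((m * φ.natDegree : ℕ) : WithBot ℕ) := by
            have : (c i * φ ^ i).natDegree < m * φ.natDegree := by nlinarith
            exact_mod_cast this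
    have hsum : degree (∑ i ∈ range m, c i * φ ^ i) < ((m * φ.natDegree : ℕ) : WithBot ℕ) := by
      apply lt_of_le_of_lt (degree_sum_le _ _)
      rw [Finset.sup_lt_iff (WithBot.bot_lt_coe _)]
      exact this
    apply lt_of_lt_of_le hsum
    rw [hdcm]
    exact_mod_cast Nat.le_add_left _ _
  rw [Finset.sum_range_succ]
  constructor
  · rw [leadingCoeff_add_of_degree_lt hmain, leadingCoeff_mul, leadingCoeff_pow, hm.leadingCoeff, one_pow, mul_one]
  · intro h0
    have : degree (∑ i ∈ range m, c i * φ ^ i + c m * φ ^ m) = ⊥ := by rw [h0, degree_zero]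
    have hdd : degree (∑ i ∈ range m, c i * φ ^ i + c m * φ ^ m) = degree (c m * φ ^ m) :=
      degree_add_eq_right_of_degree_lt hmain
    rw [hdd, degree_eq_bot] at this
    exact mul_ne_zero hcm (pow_ne_zero _ hm.ne_zero) this
lemma heart {p k : ℕ} (hp : p.Prime) (hm : φ.Monic)
    (hirr : Irreducible (φ.map (Int.castRingHom (ZMod p))))
    {q r : Polynomial ℤ} (hq : q ≠ 0) (hr : r ≠ 0)
    {A B i1 j1 : ℕ}
    (hq1 : fexp φ q i1 ≠ 0) (hq1v : k * vpx p (fexp φ q i1) + i1 = A)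
    (hqmin : ∀ i, fexp φ q i ≠ 0 → A ≤ k * vpx p (fexp φ q i) + i)
    (hqmax : ∀ i, i1 < i → fexp φ q i ≠ 0 → A < k * vpx p (fexp φ q i) + i)
    (hr1 : fexp φ r j1 ≠ 0) (hr1v : k * vpx p (fexp φ r j1) + j1 = B)
    (hrmin : ∀ j, fexp φ r j ≠ 0 → B ≤ k * vpx p (fexp φ r j) + j)
    (hrmax : ∀ j, j1 < j → fexp φ r j ≠ 0 → B < k * vpx p (fexp φ r j) + j) :
    (∀ n, fexp φ (q*r) n ≠ 0 → A + B ≤ k * vpx p (fexp φ (q*r) n) + n) ∧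
    (fexp φ (q*r) (i1+j1) ≠ 0 ∧ k * vpx p (fexp φ (q*r) (i1+j1)) + (i1+j1) = A + B) := by
  haveI := Fact.mk hp
  have hD : 0 < φ.natDegree := by
    rw [← hm.natDegree_map (Int.castRingHom (ZMod p))]
    exact hirr.natDegree_pos
  set Nq := q.natDegree + 1 with hNq
  set Nr := r.natDegree + 1 with hNr
  set P := (range Nq) ×ˢ (range Nr) with hP
  set ρ : ℕ × ℕ → Polynomial ℤ := fun x => (fexp φ q x.1 * fexp φ r x.2) %ₘ φ with hρ
  set β : ℕ × ℕ → Polynomial ℤ := fun x => (fexp φ q x.1 * fexp φ r x.2) /ₘ φ with hβ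
  set c : ℕ → Polynomial ℤ := fun n =>
    (∑ x ∈ P.filter (fun x => x.1 + x.2 = n), ρ x) +
    (∑ x ∈ P.filter (fun x => x.1 + x.2 + 1 = n), β x) with hc
  -- Step 1 : expansion of the product
  have step1 : q * r = ∑ n ∈ range (Nq + Nr), c n * φ ^ n := by
    have hq' : q = ∑ i ∈ range Nq, fexp φ q i * φ ^ i :=
      (sum_fexp hm hD _ _ (lt_add_one _)).symm
    have hr' : r = ∑ j ∈ range Nr, fexp φ r j * φ ^ j :=
      (sum_fexp hm hD _ _ (lt_add_one _)).symm
    have e1 : q * r = ∑ x ∈ P, (fexp φ q x.1 * fexp φ r x.2) * φ ^ (x.1 + x.2) := by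
      conv_lhs => rw [hq', hr']
      rw [Finset.sum_mul_sum, hP, Finset.sum_product]
      apply Finset.sum_congr rfl; intro i _
      apply Finset.sum_congr rfl; intro j _
      rw [pow_add]; ring
    have e2 : q * r = (∑ x ∈ P, ρ x * φ ^ (x.1 + x.2)) +
        (∑ x ∈ P, β x * φ ^ (x.1 + x.2 + 1)) := by
      rw [e1, ← Finset.sum_add_distrib]
      apply Finset.sum_congr rfl; intro x _
      have hdm := modByMonic_add_div (fexp φ q x.1 * fexp φ r x.2) φ
      calc fexp φ q x.1 * fexp φ r x.2 * φ ^ (x.1 + x.2)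
          = (ρ x + φ * β x) * φ ^ (x.1 + x.2) := by rw [hρ, hβ, hdm]
        _ = ρ x * φ ^ (x.1 + x.2) + β x * φ ^ (x.1 + x.2 + 1) := by rw [pow_succ]; ring
    have m1 : ∀ x ∈ P, x.1 + x.2 ∈ range (Nq + Nr) := by
      intro x hx
      rw [hP, Finset.mem_product, mem_range, mem_range] at hx
      rw [mem_range]; omega
    have m2 : ∀ x ∈ P, x.1 + x.2 + 1 ∈ range (Nq + Nr) := by
      intro x hx
      rw [hP, Finset.mem_product, mem_range, mem_range] at hx
      rw [mem_range]; omega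
    have f1 : (∑ x ∈ P, ρ x * φ ^ (x.1 + x.2)) =
        ∑ n ∈ range (Nq + Nr), (∑ x ∈ P.filter (fun x => x.1 + x.2 = n), ρ x) * φ ^ n := by
      rw [← Finset.sum_fiberwise_of_maps_to m1 (fun x => ρ x * φ ^ (x.1 + x.2))]
      apply Finset.sum_congr rfl; intro n _
      rw [Finset.sum_mul]
      apply Finset.sum_congr rfl; intro x hx
      rw [(Finset.mem_filter.mp hx).2]
    have f2 : (∑ x ∈ P, β x * φ ^ (x.1 + x.2 + 1)) =
        ∑ n ∈ range (Nq + Nr), (∑ x ∈ P.filter (fun x => x.1 + x.2 + 1 = n), β x) * φ ^ n := by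
      rw [← Finset.sum_fiberwise_of_maps_to m2 (fun x => β x * φ ^ (x.1 + x.2 + 1))]
      apply Finset.sum_congr rfl; intro n _
      rw [Finset.sum_mul]
      apply Finset.sum_congr rfl; intro x hx
      rw [(Finset.mem_filter.mp hx).2]
    rw [e2, f1, f2, ← Finset.sum_add_distrib]
    apply Finset.sum_congr rfl; intro n _
    rw [hc]; ring
  -- Step 2 : degrees
  have step2 : ∀ n, (c n).degree < φ.degree := by
    intro n
    have hbot : (⊥ : WithBot ℕ) < φ.degree :=
      bot_lt_iff_ne_bot.2 (fun hb' => hm.ne_zero (degree_eq_bot.1 hb'))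
    have d1 : (∑ x ∈ P.filter (fun x => x.1 + x.2 = n), ρ x).degree < φ.degree := by
      apply lt_of_le_of_lt (degree_sum_le _ _)
      rw [Finset.sup_lt_iff hbot]
      intro x _
      exact degree_modByMonic_lt _ hm
    have d2 : (∑ x ∈ P.filter (fun x => x.1 + x.2 + 1 = n), β x).degree < φ.degree := by
      apply lt_of_le_of_lt (degree_sum_le _ _)
      rw [Finset.sup_lt_iff hbot]
      intro x _
      exact degree_div_lt' hm hD (degree_fexp_lt hm _ _) (degree_fexp_lt hm _ _)
    exact lt_of_le_of_lt (degree_add_le _ _) (max_lt d1 d2)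
  have hcfe : ∀ n, fexp φ (q*r) n = if n < Nq + Nr then c n else 0 :=
    fexp_unique hm _ _ _ step2 step1
  -- divisibility counting
  have hcount : ∀ e n, k*e + n < A + B → C ((p:ℤ)^(e+1)) ∣ c n := by
    intro e n hlt
    rw [hc]
    apply dvd_add <;> apply Finset.dvd_sum <;> intro x hx
    · rcases eq_or_ne (fexp φ q x.1 * fexp φ r x.2) 0 with h0 | h0
      · rw [hρ]; simp only [h0, zero_modByMonic]; exact dvd_zero _
      · have hq0 : fexp φ q x.1 ≠ 0 := fun h => h0 (by rw [h, zero_mul])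
        have hr0 : fexp φ r x.2 ≠ 0 := fun h => h0 (by rw [h, mul_zero])
        have hn : x.1 + x.2 = n := (Finset.mem_filter.mp hx).2
        set v1 := vpx p (fexp φ q x.1) with hv1
        set v2 := vpx p (fexp φ r x.2) with hv2
        have e1 : A ≤ k*v1 + x.1 := hqmin _ hq0
        have e2 : B ≤ k*v2 + x.2 := hrmin _ hr0
        have hev : e < v1 + v2 := by
          have h3 : k*e < k*(v1+v2) := by rw [Nat.mul_add]; omega
          exact Nat.lt_of_mul_lt_mul_left h3
        have d1 : C ((p:ℤ)^v1) ∣ fexp φ q x.1 := (vpx_le_iff hp hq0).mpr le_rfl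
        have d2 : C ((p:ℤ)^v2) ∣ fexp φ r x.2 := (vpx_le_iff hp hr0).mpr le_rfl
        have d3 : C ((p:ℤ)^(v1+v2)) ∣ fexp φ q x.1 * fexp φ r x.2 := by
          rw [pow_add, C_mul]; exact mul_dvd_mul d1 d2
        have d4 : C ((p:ℤ)^(v1+v2)) ∣ ρ x := (Cdvd_modByMonic hm d3).1
        exact dvd_trans (map_dvd Polynomial.C (pow_dvd_pow _ (by omega))) d4
    · rcases eq_or_ne (fexp φ q x.1 * fexp φ r x.2) 0 with h0 | h0
      · rw [hβ]; simp only [h0, zero_divByMonic]; exact dvd_zero _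
      · have hq0 : fexp φ q x.1 ≠ 0 := fun h => h0 (by rw [h, zero_mul])
        have hr0 : fexp φ r x.2 ≠ 0 := fun h => h0 (by rw [h, mul_zero])
        have hn : x.1 + x.2 + 1 = n := (Finset.mem_filter.mp hx).2
        set v1 := vpx p (fexp φ q x.1) with hv1
        set v2 := vpx p (fexp φ r x.2) with hv2
        have e1 : A ≤ k*v1 + x.1 := hqmin _ hq0
        have e2 : B ≤ k*v2 + x.2 := hrmin _ hr0
        have hev : e < v1 + v2 := by
          have h3 : k*e < k*(v1+v2) := by rw [Nat.mul_add]; omega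
          exact Nat.lt_of_mul_lt_mul_left h3
        have d1 : C ((p:ℤ)^v1) ∣ fexp φ q x.1 := (vpx_le_iff hp hq0).mpr le_rfl
        have d2 : C ((p:ℤ)^v2) ∣ fexp φ r x.2 := (vpx_le_iff hp hr0).mpr le_rfl
        have d3 : C ((p:ℤ)^(v1+v2)) ∣ fexp φ q x.1 * fexp φ r x.2 := by
          rw [pow_add, C_mul]; exact mul_dvd_mul d1 d2
        have d4 : C ((p:ℤ)^(v1+v2)) ∣ β x := (Cdvd_modByMonic hm d3).2
        exact dvd_trans (map_dvd Polynomial.C (pow_dvd_pow _ (by omega))) d4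
  have concl1 : ∀ n, fexp φ (q*r) n ≠ 0 → A + B ≤ k * vpx p (fexp φ (q*r) n) + n := by
    intro n hne
    by_cases hn : n < Nq + Nr
    · rw [hcfe n, if_pos hn] at hne ⊢
      by_contra hcon
      push_neg at hcon
      have hd := hcount _ _ hcon
      have := (vpx_le_iff hp hne).mp hd
      omega
    · rw [hcfe n, if_neg hn] at hne
      exact absurd rfl hne
  refine ⟨concl1, ?_⟩
  have hi1N : i1 < Nq := by
    by_contra hcon
    exact hq1 (fexp_eq_zero hm hD i1 q (by omega))
  have hj1N : j1 < Nr := by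
    by_contra hcon
    exact hr1 (fexp_eq_zero hm hD j1 r (by omega))
  set n' := i1 + j1 with hn'
  have hmem : (i1, j1) ∈ P.filter (fun x => x.1 + x.2 = n') := by
    rw [Finset.mem_filter, hP, Finset.mem_product]
    exact ⟨⟨mem_range.2 hi1N, mem_range.2 hj1N⟩, rfl⟩
  set vq := vpx p (fexp φ q i1) with hvq
  set vr := vpx p (fexp φ r j1) with hvr
  set V := vq + vr with hV
  have hABV : k * V + n' = A + B := by rw [hV, Nat.mul_add]; omega
  have hothers : ∀ x ∈ (P.filter (fun x => x.1 + x.2 = n')).erase (i1, j1),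
      C ((p:ℤ)^(V+1)) ∣ ρ x := by
    intro x hx
    have hxne : x ≠ (i1, j1) := Finset.ne_of_mem_erase hx
    have hxf := Finset.mem_of_mem_erase hx
    have hn : x.1 + x.2 = n' := (Finset.mem_filter.mp hxf).2
    rcases eq_or_ne (fexp φ q x.1 * fexp φ r x.2) 0 with h0 | h0
    · rw [hρ]; simp only [h0, zero_modByMonic]; exact dvd_zero _
    · have hq0 : fexp φ q x.1 ≠ 0 := fun h => h0 (by rw [h, zero_mul])
      have hr0 : fexp φ r x.2 ≠ 0 := fun h => h0 (by rw [h, mul_zero])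
      set v1 := vpx p (fexp φ q x.1) with hv1
      set v2 := vpx p (fexp φ r x.2) with hv2
      have hne12 : ¬(x.1 = i1 ∧ x.2 = j1) := fun h => hxne (Prod.ext h.1 h.2)
      have hcase : i1 < x.1 ∨ j1 < x.2 := by omega
      have key : k*V + 1 ≤ k*v1 + k*v2 := by
        rcases hcase with h | h
        · have e1 : A < k*v1 + x.1 := hqmax _ h hq0
          have e2 : B ≤ k*v2 + x.2 := hrmin _ hr0
          omega
        · have e1 : A ≤ k*v1 + x.1 := hqmin _ hq0
          have e2 : B < k*v2 + x.2 := hrmax _ h hr0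
          omega
      have hVlt : V + 1 ≤ v1 + v2 := by
        have h3 : k*V < k*(v1+v2) := by
          have hma : k*(v1+v2) = k*v1 + k*v2 := Nat.mul_add k v1 v2
          omega
        have := Nat.lt_of_mul_lt_mul_left h3
        omega
      have d1 : C ((p:ℤ)^v1) ∣ fexp φ q x.1 := (vpx_le_iff hp hq0).mpr le_rfl
      have d2 : C ((p:ℤ)^v2) ∣ fexp φ r x.2 := (vpx_le_iff hp hr0).mpr le_rfl
      have d3 : C ((p:ℤ)^(v1+v2)) ∣ fexp φ q x.1 * fexp φ r x.2 := by
        rw [pow_add, C_mul]; exact mul_dvd_mul d1 d2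
      exact dvd_trans (map_dvd Polynomial.C (pow_dvd_pow _ hVlt)) ((Cdvd_modByMonic hm d3).1)
  have hbetas : ∀ x ∈ P.filter (fun x => x.1 + x.2 + 1 = n'),
      C ((p:ℤ)^(V+1)) ∣ β x := by
    intro x hx
    have hn : x.1 + x.2 + 1 = n' := (Finset.mem_filter.mp hx).2
    rcases eq_or_ne (fexp φ q x.1 * fexp φ r x.2) 0 with h0 | h0
    · rw [hβ]; simp only [h0, zero_divByMonic]; exact dvd_zero _
    · have hq0 : fexp φ q x.1 ≠ 0 := fun h => h0 (by rw [h, zero_mul])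
      have hr0 : fexp φ r x.2 ≠ 0 := fun h => h0 (by rw [h, mul_zero])
      set v1 := vpx p (fexp φ q x.1) with hv1
      set v2 := vpx p (fexp φ r x.2) with hv2
      have e1 : A ≤ k*v1 + x.1 := hqmin _ hq0
      have e2 : B ≤ k*v2 + x.2 := hrmin _ hr0
      have key : k*V + 1 ≤ k*v1 + k*v2 := by omega
      have hVlt : V + 1 ≤ v1 + v2 := by
        have h3 : k*V < k*(v1+v2) := by
          have hma : k*(v1+v2) = k*v1 + k*v2 := Nat.mul_add k v1 v2
          omega
        have := Nat.lt_of_mul_lt_mul_left h3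
        omega
      have d1 : C ((p:ℤ)^v1) ∣ fexp φ q x.1 := (vpx_le_iff hp hq0).mpr le_rfl
      have d2 : C ((p:ℤ)^v2) ∣ fexp φ r x.2 := (vpx_le_iff hp hr0).mpr le_rfl
      have d3 : C ((p:ℤ)^(v1+v2)) ∣ fexp φ q x.1 * fexp φ r x.2 := by
        rw [pow_add, C_mul]; exact mul_dvd_mul d1 d2
      exact dvd_trans (map_dvd Polynomial.C (pow_dvd_pow _ hVlt)) ((Cdvd_modByMonic hm d3).2)
  obtain ⟨q', hq'eq, hq'nd⟩ := exists_primitive hp hq1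
  obtain ⟨r', hr'eq, hr'nd⟩ := exists_primitive hp hr1
  have hprime : Prime (φ.map (Int.castRingHom (ZMod p))) :=
    UniqueFactorizationMonoid.irreducible_iff_prime.mp hirr
  have hρ'nd : ¬ C ((p:ℤ)) ∣ ((q' * r') %ₘ φ) := by
    rw [← map_eq_zero_iff_Cp (p := p)]
    rw [map_modByMonic (Int.castRingHom (ZMod p)) hm]
    rw [modByMonic_eq_zero_iff_dvd (hm.map (Int.castRingHom (ZMod p))),
      Polynomial.map_mul]
    intro hdvd
    have hq'0 : q'.map (Int.castRingHom (ZMod p)) ≠ 0 :=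
      fun h => hq'nd ((map_eq_zero_iff_Cp q').mp h)
    have hr'0 : r'.map (Int.castRingHom (ZMod p)) ≠ 0 :=
      fun h => hr'nd ((map_eq_zero_iff_Cp r').mp h)
    have hdegq' : (q'.map (Int.castRingHom (ZMod p))).degree <
        (φ.map (Int.castRingHom (ZMod p))).degree := by
      have h1 : q' ∣ fexp φ q i1 := Dvd.intro_left _ hq'eq.symm
      calc (q'.map (Int.castRingHom (ZMod p))).degree ≤ q'.degree := degree_map_le
        _ ≤ (fexp φ q i1).degree := degree_le_of_dvd h1 hq1
        _ < φ.degree := degree_fexp_lt hm _ _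
        _ = (φ.map (Int.castRingHom (ZMod p))).degree :=
            (hm.degree_map (Int.castRingHom (ZMod p))).symm
    have hdegr' : (r'.map (Int.castRingHom (ZMod p))).degree <
        (φ.map (Int.castRingHom (ZMod p))).degree := by
      have h1 : r' ∣ fexp φ r j1 := Dvd.intro_left _ hr'eq.symm
      calc (r'.map (Int.castRingHom (ZMod p))).degree ≤ r'.degree := degree_map_le
        _ ≤ (fexp φ r j1).degree := degree_le_of_dvd h1 hr1
        _ < φ.degree := degree_fexp_lt hm _ _
        _ = (φ.map (Int.castRingHom (ZMod p))).degree :=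
            (hm.degree_map (Int.castRingHom (ZMod p))).symm
    rcases hprime.2.2 _ _ hdvd with h | h
    · exact absurd (degree_le_of_dvd h hq'0) (not_le.2 hdegq')
    · exact absurd (degree_le_of_dvd h hr'0) (not_le.2 hdegr')
  have hmainV : C ((p:ℤ)^V) ∣ ρ (i1, j1) ∧ ¬ C ((p:ℤ)^(V+1)) ∣ ρ (i1, j1) := by
    have hfact : fexp φ q i1 * fexp φ r j1 = C ((p:ℤ)^V) * (q' * r') := by
      rw [hq'eq, hr'eq, hV, hvq, hvr, pow_add, C_mul]; ring
    have hρval : ρ (i1, j1) = C ((p:ℤ)^V) * ((q' * r') %ₘ φ) := by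
      show (fexp φ q i1 * fexp φ r j1) %ₘ φ = _
      rw [hfact, (C_mul_modByMonic hm _ _).1]
    constructor
    · rw [hρval]; exact Dvd.intro _ rfl
    · rw [hρval]
      intro hd
      apply hρ'nd
      have hC : (C ((p:ℤ)^(V+1)) : Polynomial ℤ) = C ((p:ℤ)^V) * C ((p:ℤ)) := by
        rw [← C_mul, ← pow_succ]
      rw [hC] at hd
      obtain ⟨t, ht⟩ := hd
      have hc0 : (C ((p:ℤ)^V) : Polynomial ℤ) ≠ 0 := by
        rw [Ne, C_eq_zero]
        exact pow_ne_zero _ (by exact_mod_cast hp.ne_zero)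
      have hmc : C ((p:ℤ)^V) * ((q' * r') %ₘ φ) = C ((p:ℤ)^V) * (C ((p:ℤ)) * t) := by
        rw [ht]; ring
      exact ⟨t, mul_left_cancel₀ hc0 hmc⟩
  have hsum0 : c n' = ρ (i1,j1) +
      ((∑ x ∈ (P.filter (fun x => x.1 + x.2 = n')).erase (i1,j1), ρ x) +
       (∑ x ∈ P.filter (fun x => x.1 + x.2 + 1 = n'), β x)) := by
    show (∑ x ∈ P.filter (fun x => x.1 + x.2 = n'), ρ x) +
      (∑ x ∈ P.filter (fun x => x.1 + x.2 + 1 = n'), β x) = _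
    rw [← Finset.add_sum_erase _ ρ hmem, add_assoc]
  have hrestdvd : C ((p:ℤ)^(V+1)) ∣
      ((∑ x ∈ (P.filter (fun x => x.1 + x.2 = n')).erase (i1,j1), ρ x) +
       (∑ x ∈ P.filter (fun x => x.1 + x.2 + 1 = n'), β x)) :=
    dvd_add (Finset.dvd_sum hothers) (Finset.dvd_sum hbetas)
  have hcV : C ((p:ℤ)^V) ∣ c n' := by
    rw [hsum0]
    exact dvd_add hmainV.1 (dvd_trans (map_dvd Polynomial.C (pow_dvd_pow _ (Nat.le_succ _))) hrestdvd)
  have hcnot : ¬ C ((p:ℤ)^(V+1)) ∣ c n' := by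
    intro hd
    apply hmainV.2
    have hrw : ρ (i1,j1) = c n' -
        ((∑ x ∈ (P.filter (fun x => x.1 + x.2 = n')).erase (i1,j1), ρ x) +
         (∑ x ∈ P.filter (fun x => x.1 + x.2 + 1 = n'), β x)) := by
      rw [hsum0]; ring
    rw [hrw]
    exact dvd_sub hd hrestdvd
  have hcne : c n' ≠ 0 := by
    intro h0; apply hcnot; rw [h0]; exact dvd_zero _
  have hnlt : n' < Nq + Nr := by omega
  constructor
  · rw [hcfe, if_pos hnlt]; exact hcne
  · rw [hcfe, if_pos hnlt]
    have h1 : V ≤ vpx p (c n') := (vpx_le_iff hp hcne).mp hcV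
    have h2 : ¬ (V+1 ≤ vpx p (c n')) := fun h => hcnot ((vpx_le_iff hp hcne).mpr h)
    have hveq : vpx p (c n') = V := by omega
    rw [hveq]
    omega
lemma exists_wT (hm : φ.Monic) (hD : 0 < φ.natDegree) (p k : ℕ)
    {g : Polynomial ℤ} (hg : g ≠ 0) :
    ∃ A i1, fexp φ g i1 ≠ 0 ∧ k * vpx p (fexp φ g i1) + i1 = A ∧
      (∀ i, fexp φ g i ≠ 0 → A ≤ k * vpx p (fexp φ g i) + i) ∧
      (∀ i, i1 < i → fexp φ g i ≠ 0 → A < k * vpx p (fexp φ g i) + i) := by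
  set N := g.natDegree + 1 with hN
  set S := (range N).filter (fun i => fexp φ g i ≠ 0) with hS
  have hSne : S.Nonempty := by
    rw [Finset.filter_nonempty_iff]
    by_contra hcon
    push_neg at hcon
    apply hg
    rw [← sum_fexp hm hD N g (lt_add_one _)]
    apply Finset.sum_eq_zero
    intro i hi
    rw [hcon i hi, zero_mul]
  set val : ℕ → ℕ := fun i => k * vpx p (fexp φ g i) + i with hval
  set A := (S.image val).min' (hSne.image _) with hA
  have hAmem : A ∈ S.image val := Finset.min'_mem _ _
  set Att := S.filter (fun i => val i = A) with hAtt
  have hAttne : Att.Nonempty := by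
    rw [Finset.mem_image] at hAmem
    obtain ⟨i, hiS, hival⟩ := hAmem
    exact ⟨i, Finset.mem_filter.2 ⟨hiS, hival⟩⟩
  set i1 := Att.max' hAttne with hi1
  have hi1mem : i1 ∈ Att := Finset.max'_mem _ _
  have hi1S : i1 ∈ S := (Finset.mem_filter.mp hi1mem).1
  have hi1val : val i1 = A := (Finset.mem_filter.mp hi1mem).2
  have hmemS : ∀ i, fexp φ g i ≠ 0 → i ∈ S := by
    intro i hi
    rw [hS, Finset.mem_filter, mem_range]
    refine ⟨?_, hi⟩
    by_contra hcon
    exact hi (fexp_eq_zero hm hD i g (by omega))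
  refine ⟨A, i1, (Finset.mem_filter.mp hi1S).2, hi1val, ?_, ?_⟩
  · intro i hi
    exact Finset.min'_le _ _ (Finset.mem_image_of_mem val (hmemS i hi))
  · intro i hlt hi
    have hiS := hmemS i hi
    have hle : A ≤ val i := Finset.min'_le _ _ (Finset.mem_image_of_mem val hiS)
    rcases Nat.eq_or_lt_of_le hle with heq | hlt'
    · exfalso
      have : i ∈ Att := Finset.mem_filter.2 ⟨hiS, heq.symm⟩
      have := Finset.le_max' _ _ this
      omega
    · exact hlt'
lemma lc_map_ne {p : ℕ} {g : Polynomial ℤ} (h : ¬ ((p:ℤ) ∣ g.leadingCoeff)) :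
    (Int.castRingHom (ZMod p)) g.leadingCoeff ≠ 0 := by
  rw [eq_intCast, Ne, ZMod.intCast_zmod_eq_zero_iff_dvd]; exact h

lemma map_ne_zero_of_lc {p : ℕ} {g : Polynomial ℤ} (h : ¬ ((p:ℤ) ∣ g.leadingCoeff)) :
    g.map (Int.castRingHom (ZMod p)) ≠ 0 := by
  intro h0
  apply h
  have h1 := congrArg (fun q => Polynomial.coeff q g.natDegree) h0
  simp only [coeff_map, coeff_zero] at h1
  rwa [eq_intCast, ZMod.intCast_zmod_eq_zero_iff_dvd] at h1

end NPaux

open NPaux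

theorem newton_polygon_no_factor (m k ℓ : ℕ) (p : ℕ) (hp : p.Prime)
    (hlk : ℓ < k) (hkm : 2 * k ≤ m)
    (φ : Polynomial ℤ) (hmonic : φ.Monic)
    (hirr : Irreducible (φ.map (Int.castRingHom (ZMod p))))
    (f : Polynomial ℤ) (hf : f.Monic) (hnd : ¬ φ ∣ f)
    (fc : ℕ → Polynomial ℤ)
    (hdegfc : ∀ i, (fc i).degree < φ.degree)
    (hexp : f = ∑ i ∈ Finset.range (m + 1), fc i * φ ^ i)
    (hfm : fc m ≠ 0) (hf0 : fc 0 ≠ 0)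
    (hval : ∀ i, i + ℓ + 1 ≤ m → 0 < vpx p (fc i))
    (hslope : ∀ j, 1 ≤ j → j ≤ m → fc j ≠ 0 →
      (k : ℤ) * ((vpx p (fc 0) : ℤ) - (vpx p (fc j) : ℤ)) < (j : ℤ))
    (a : ℕ → Polynomial ℤ)
    (hdega : ∀ i, i ≤ m → (a i).degree + (fc i).degree < φ.degree)
    (ha0 : ¬ ((p : ℤ) ∣ (a 0).content))
    (ham : ¬ ((p : ℤ) ∣ (a m).leadingCoeff)) :
    ∀ g : Polynomial ℤ, g ∣ (∑ i ∈ Finset.range (m + 1), a i * fc i * φ ^ i) →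
      ¬ ((ℓ + 1) * φ.natDegree ≤ g.natDegree ∧
          g.natDegree < (k + 1) * φ.natDegree) := by
  intro g hgdvd
  rintro ⟨hlow, hhigh⟩
  classical
  haveI := Fact.mk hp
  set Mp := Int.castRingHom (ZMod p) with hMp
  set G := ∑ i ∈ Finset.range (m + 1), a i * fc i * φ ^ i with hG
  set D := φ.natDegree with hDdef
  have hD : 0 < D := by
    rw [hDdef, ← hmonic.natDegree_map Mp]; exact hirr.natDegree_pos
  have hk : 0 < k := by omega
  -- leading coefficient of fc m is 1
  have hfcm1 : (fc m).leadingCoeff = 1 := by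
    have hl := leading_aux hmonic hD fc m (fun i _ => hdegfc i) hfm
    rw [← hexp] at hl
    rw [← hl.1]; exact hf.leadingCoeff
  have ham0 : a m ≠ 0 := by
    intro h0; rw [h0] at ham; exact ham (by simp)
  have ha00 : a 0 ≠ 0 := by
    intro h0; rw [h0] at ha0; exact ha0 (by simp)
  have hamfcm : a m * fc m ≠ 0 := mul_ne_zero ham0 hfm
  have hdegam : ∀ i, i ≤ m → (a i * fc i).degree < φ.degree := by
    intro i hi
    calc (a i * fc i).degree = (a i).degree + (fc i).degree := degree_mul
      _ < φ.degree := hdega i hi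
  have hGlead := leading_aux hmonic hD (fun i => a i * fc i) m (fun i hi => hdegam i hi) hamfcm
  have hlcG : G.leadingCoeff = (a m).leadingCoeff := by
    rw [hG, hGlead.1, leadingCoeff_mul, hfcm1, mul_one]
  have hGne : G ≠ 0 := by rw [hG]; exact hGlead.2
  have hpG : ¬ ((p:ℤ) ∣ G.leadingCoeff) := by rw [hlcG]; exact ham
  -- the φ-expansion of G
  set cg : ℕ → Polynomial ℤ := fun i => if i ≤ m then a i * fc i else 0 with hcg
  have hGsum : G = ∑ i ∈ Finset.range (m+1), cg i * φ^i := by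
    rw [hG]
    apply Finset.sum_congr rfl
    intro i hi
    rw [Finset.mem_range] at hi
    rw [hcg]
    simp only
    rw [if_pos (by omega : i ≤ m)]
  have hdegcg : ∀ i, (cg i).degree < φ.degree := by
    intro i
    rw [hcg]; simp only
    split
    · exact hdegam i (by omega)
    · rw [degree_zero]
      exact bot_lt_iff_ne_bot.2 (fun hb' => hmonic.ne_zero (degree_eq_bot.1 hb'))
  have hfeG : ∀ n, fexp φ G n = if n < m+1 then cg n else 0 :=
    fexp_unique hmonic (m+1) cg G hdegcg hGsum
  have hfeG' : ∀ n, n ≤ m → fexp φ G n = a n * fc n := by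
    intro n hn
    rw [hfeG n, if_pos (by omega), hcg]
    simp only
    rw [if_pos hn]
  have hfeGz : ∀ n, m < n → fexp φ G n = 0 := by
    intro n hn
    rw [hfeG n]
    rcases Nat.lt_or_ge n (m+1) with h | h
    · omega
    · rw [if_neg (by omega)]
  -- factorization
  obtain ⟨h, hGh⟩ := hgdvd
  have hgne : g ≠ 0 := by rintro rfl; rw [zero_mul] at hGh; exact hGne hGh
  have hhne : h ≠ 0 := by rintro rfl; rw [mul_zero] at hGh; exact hGne hGh
  have hlcgh : g.leadingCoeff * h.leadingCoeff = G.leadingCoeff := by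
    rw [hGh, leadingCoeff_mul]
  have hplcg : ¬ ((p:ℤ) ∣ g.leadingCoeff) := by
    intro hd; exact hpG (hlcgh ▸ dvd_mul_of_dvd_left hd _)
  have hMGne : G.map Mp ≠ 0 := map_ne_zero_of_lc hpG
  have hMgne : g.map Mp ≠ 0 := map_ne_zero_of_lc hplcg
  -- apply the key lemma
  obtain ⟨A, i1, hg1, hg1v, hgmin, hgmax⟩ := exists_wT hmonic hD p k hgne
  obtain ⟨B, j1, hh1, hh1v, hhmin, hhmax⟩ := exists_wT hmonic hD p k hhne
  have hheart := heart hp hmonic hirr hgne hhne hg1 hg1v hgmin hgmax hh1 hh1v hhmin hhmax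
  rw [← hGh] at hheart
  obtain ⟨hC1, hC2a, hC2b⟩ := hheart
  -- the minimum of the w-function on G is attained only at 0, hence i1 = j1 = 0
  have ha0fc0 : a 0 * fc 0 ≠ 0 := mul_ne_zero ha00 hf0
  have hfeG0' : fexp φ G 0 = a 0 * fc 0 := hfeG' 0 (by omega)
  have hAB0 : A + B ≤ k * vpx p (a 0 * fc 0) := by
    have hx := hC1 0 (by rw [hfeG0']; exact ha0fc0)
    rw [hfeG0'] at hx; omega
  have hvpa0 : vpx p (a 0) = 0 := by
    show padicValInt p (a 0).content = 0
    exact padicValInt.eq_zero_of_not_dvd ha0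
  have hv00 : vpx p (a 0 * fc 0) = vpx p (fc 0) := by
    rw [vpx_mul hp ha00 hf0, hvpa0, zero_add]
  have hn0 : i1 + j1 = 0 := by
    by_contra hne0
    have hn1 : 1 ≤ i1 + j1 := by omega
    have hnm : i1 + j1 ≤ m := by
      by_contra hgt
      rw [hfeGz _ (by omega)] at hC2a
      exact hC2a rfl
    rw [hfeG' _ hnm] at hC2a hC2b
    have hfcn : fc (i1+j1) ≠ 0 := fun h0 => hC2a (by rw [h0, mul_zero])
    have han : a (i1+j1) ≠ 0 := fun h0 => hC2a (by rw [h0, zero_mul])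
    have hvsplit : vpx p (a (i1+j1) * fc (i1+j1)) =
        vpx p (a (i1+j1)) + vpx p (fc (i1+j1)) := vpx_mul hp han hfcn
    have hs := hslope (i1+j1) hn1 hnm hfcn
    rw [hv00] at hAB0
    rw [hvsplit] at hC2b
    have h2 : k * vpx p (fc (i1+j1)) + (i1+j1) ≤ k * vpx p (fc 0) := by
      have hmono : k * vpx p (fc (i1+j1)) ≤
          k * (vpx p (a (i1+j1)) + vpx p (fc (i1+j1))) :=
        Nat.mul_le_mul_left _ (by omega)
      have hma : k * (vpx p (a (i1+j1)) + vpx p (fc (i1+j1))) =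
          k * vpx p (a (i1+j1)) + k * vpx p (fc (i1+j1)) := Nat.mul_add _ _ _
      omega
    have h3 : ((i1+j1 : ℕ) : ℤ) ≤
        (k:ℤ) * ((vpx p (fc 0) : ℤ) - (vpx p (fc (i1+j1)) : ℤ)) := by
      have hzi : (k:ℤ) * (vpx p (fc (i1+j1)) : ℤ) + ((i1+j1 : ℕ) : ℤ) ≤
          (k:ℤ) * (vpx p (fc 0) : ℤ) := by exact_mod_cast h2
      have hring : (k:ℤ) * ((vpx p (fc 0) : ℤ) - (vpx p (fc (i1+j1)) : ℤ)) =
          (k:ℤ) * (vpx p (fc 0) : ℤ) - (k:ℤ) * (vpx p (fc (i1+j1)) : ℤ) := by ring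
      omega
    omega
  have hi10 : i1 = 0 := by omega
  -- construct s : the first expansion coefficient of g not divisible by p
  set N := g.natDegree + 1 with hN
  set Sp := (Finset.range N).filter (fun i => ¬ C ((p:ℤ)) ∣ fexp φ g i) with hSp
  have hSpne : Sp.Nonempty := by
    rw [hSp, Finset.filter_nonempty_iff]
    by_contra hcon
    push_neg at hcon
    have hCpg : C ((p:ℤ)) ∣ g := by
      conv_rhs => rw [← sum_fexp hmonic hD N g (lt_add_one _)]
      apply Finset.dvd_sum
      intro i hi
      exact dvd_mul_of_dvd_left (hcon i hi) _
    apply hMGne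
    rw [hGh, Polynomial.map_mul, (map_eq_zero_iff_Cp g).mpr hCpg, zero_mul]
  set s := Sp.min' hSpne with hs_def
  have hsmem : s ∈ Sp := Finset.min'_mem _ _
  have hsrange : s < N := by
    have := (Finset.mem_filter.mp hsmem).1
    rwa [Finset.mem_range] at this
  have hsnd : ¬ C ((p:ℤ)) ∣ fexp φ g s := (Finset.mem_filter.mp hsmem).2
  have hbelow : ∀ i, i < s → C ((p:ℤ)) ∣ fexp φ g i := by
    intro i hi
    by_contra hcon
    have hmem2 : i ∈ Sp := by
      rw [hSp, Finset.mem_filter, Finset.mem_range]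
      exact ⟨by omega, hcon⟩
    have := Finset.min'_le _ _ hmem2
    omega
  rcases Nat.eq_zero_or_pos s with hs0 | hs1
  · -- case s = 0 : g is coprime to φ mod p, so its degree is < (ℓ+1)D
    have hgnd : ¬ ((φ.map Mp) ∣ g.map Mp) := by
      intro hdvd
      rw [← modByMonic_eq_zero_iff_dvd (hmonic.map Mp), ← map_modByMonic Mp hmonic] at hdvd
      have hcp := (map_eq_zero_iff_Cp (g %ₘ φ)).mp hdvd
      rw [← fexp_zero] at hcp
      rw [hs0] at hsnd
      exact hsnd hcp
    set U := ∑ i ∈ Finset.range (ℓ+1),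
      ((a (m-ℓ+i) * fc (m-ℓ+i)).map Mp) * (φ.map Mp)^i with hU
    have hMG : G.map Mp = (φ.map Mp)^(m-ℓ) * U := by
      rw [hG, Polynomial.map_sum]
      have hterm : ∀ i ∈ Finset.range (m+1), ((a i * fc i * φ^i).map Mp) =
          ((a i * fc i).map Mp) * (φ.map Mp)^i := by
        intro i _
        rw [Polynomial.map_mul, Polynomial.map_pow]
      rw [Finset.sum_congr rfl hterm]
      have hsplit : m + 1 = (m-ℓ) + (ℓ+1) := by omega
      rw [hsplit, Finset.sum_range_add]
      have hzero : ∀ i ∈ Finset.range (m-ℓ), ((a i * fc i).map Mp) * (φ.map Mp)^i = 0 := by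
        intro i hi
        rw [Finset.mem_range] at hi
        have hvp : 0 < vpx p (fc i) := hval i (by omega)
        have hfci : fc i ≠ 0 := by
          intro h0; rw [h0] at hvp; simp [vpx] at hvp
        have hd1 : C ((p:ℤ)) ∣ fc i := (Cp_dvd_iff hp hfci).mpr (by omega)
        have hd2 : C ((p:ℤ)) ∣ a i * fc i := Dvd.dvd.mul_left hd1 _
        rw [(map_eq_zero_iff_Cp _).mpr hd2, zero_mul]
      rw [Finset.sum_eq_zero hzero, zero_add, hU, Finset.mul_sum]
      apply Finset.sum_congr rfl
      intro i _
      rw [pow_add]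
      ring
    have hUne : U ≠ 0 := by
      intro h0; apply hMGne; rw [hMG, h0, mul_zero]
    have hgdvdU : g.map Mp ∣ U := by
      have hdvd : g.map Mp ∣ (φ.map Mp)^(m-ℓ) * U := by
        rw [← hMG]
        exact Polynomial.map_dvd Mp ⟨h, hGh⟩
      have hcop : IsCoprime (g.map Mp) ((φ.map Mp)^(m-ℓ)) :=
        Irreducible.coprime_pow_of_not_dvd _ hirr hgnd
      exact hcop.symm.symm.dvd_of_dvd_mul_left hdvd
    have hUdeg : U.natDegree < (ℓ+1) * D := by
      have hb : ∀ i ∈ Finset.range (ℓ+1),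
          (((a (m-ℓ+i) * fc (m-ℓ+i)).map Mp) * (φ.map Mp)^i).natDegree ≤ ℓ*D + (D-1) := by
        intro i hi
        rw [Finset.mem_range] at hi
        have h1 : ((a (m-ℓ+i) * fc (m-ℓ+i)).map Mp).natDegree ≤ D - 1 := by
          rcases eq_or_ne (a (m-ℓ+i) * fc (m-ℓ+i)) 0 with h0 | h0
          · rw [h0]; simp
          · have hlt : (a (m-ℓ+i) * fc (m-ℓ+i)).natDegree < D :=
              natDegree_lt_natDegree h0 (hdegam _ (by omega))
            have := natDegree_map_le (f := Mp) (p := a (m-ℓ+i) * fc (m-ℓ+i))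
            omega
        have h2 : (((φ.map Mp))^i).natDegree = i * D := by
          rw [natDegree_pow, hmonic.natDegree_map]
        calc (((a (m-ℓ+i) * fc (m-ℓ+i)).map Mp) * (φ.map Mp)^i).natDegree
            ≤ ((a (m-ℓ+i) * fc (m-ℓ+i)).map Mp).natDegree + ((φ.map Mp)^i).natDegree :=
              natDegree_mul_le
          _ ≤ (D-1) + i * D := by rw [h2]; omega
          _ ≤ ℓ*D + (D-1) := by
              have : i * D ≤ ℓ * D := Nat.mul_le_mul_right _ (by omega)
              omega
      have := natDegree_sum_le_of_forall_le _ _ hb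
      rw [← hU] at this
      have hld : ℓ*D + (D-1) < (ℓ+1)*D := by
        have : (ℓ+1)*D = ℓ*D + D := by ring
        omega
      omega
    have hgmapdeg : (g.map Mp).natDegree = g.natDegree :=
      natDegree_map_of_leadingCoeff_ne_zero Mp (lc_map_ne hplcg)
    have hfin : g.natDegree ≤ U.natDegree := by
      rw [← hgmapdeg]
      exact natDegree_le_of_dvd hgdvdU hUne
    omega
  · -- case s ≥ 1 : φ^s divides g mod p with s > k, so deg g ≥ (k+1)D
    have hg00 : fexp φ g 0 ≠ 0 := by rw [← hi10]; exact hg1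
    have hvg0 : 1 ≤ vpx p (fexp φ g 0) := (Cp_dvd_iff hp hg00).mp (hbelow 0 hs1)
    have hAk : k ≤ A := by
      rw [hi10] at hg1v
      have := Nat.mul_le_mul_left k hvg0
      omega
    have hfgs : fexp φ g s ≠ 0 := by
      intro h0; rw [h0] at hsnd; exact hsnd (dvd_zero _)
    have hvgs : vpx p (fexp φ g s) = 0 := by
      show padicValInt p (fexp φ g s).content = 0
      apply padicValInt.eq_zero_of_not_dvd
      intro hd
      exact hsnd (dvd_content_iff_C_dvd.mp hd)
    have hAs : A < s := by
      have hx := hgmax s (by omega) hfgs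
      rw [hvgs] at hx
      omega
    have hdvds : (φ.map Mp)^s ∣ g.map Mp := by
      have hgsum : g.map Mp = ∑ i ∈ Finset.range N, ((fexp φ g i).map Mp) * (φ.map Mp)^i := by
        conv_lhs => rw [← sum_fexp hmonic hD N g (lt_add_one _)]
        rw [Polynomial.map_sum]
        apply Finset.sum_congr rfl
        intro i _
        rw [Polynomial.map_mul, Polynomial.map_pow]
      have hNsplit : N = s + (N - s) := by omega
      rw [hgsum, hNsplit, Finset.sum_range_add]
      apply dvd_add
      · apply Finset.dvd_sum
        intro i hi
        rw [Finset.mem_range] at hi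
        rw [(map_eq_zero_iff_Cp _).mpr (hbelow i hi), zero_mul]
        exact dvd_zero _
      · apply Finset.dvd_sum
        intro i _
        exact ⟨((fexp φ g (s+i)).map Mp) * (φ.map Mp)^i, by rw [pow_add]; ring⟩
    have hsD : s * D ≤ g.natDegree := by
      have h1 := natDegree_le_of_dvd hdvds hMgne
      rw [natDegree_pow, hmonic.natDegree_map,
        natDegree_map_of_leadingCoeff_ne_zero Mp (lc_map_ne hplcg)] at h1
      exact h1
    have hkd : (k+1) * D ≤ s * D := Nat.mul_le_mul_right _ (by omega)
    omega
end

section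
/- Let a, b ∈ {2, 3, 5} and let r, s be positive integers with a^r − b^s = 1. Then (a, r, b, s) ∈ {(3,1,2,1), (2,2,3,1), (5,1,2,2), (3,2,2,3)}; that is, the only solutions are 3−2=1, 2²−3=1, 5−2²=1 and 3²−2³=1. -/
lemma sq1_pow_even_mod8 (c k : ℕ) (h : c ^ 2 % 8 = 1) : c ^ (2 * k) % 8 = 1 := by
  induction k with
  | zero => simp
  | succ n ih =>
    have e : 2 * (n + 1) = 2 * n + 2 := by ring
    rw [e, pow_add, Nat.mul_mod, ih, h]

lemma sq1_pow_odd_mod8 (c k : ℕ) (h : c ^ 2 % 8 = 1) : c ^ (2 * k + 1) % 8 = c % 8 := by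
  rw [pow_succ, Nat.mul_mod, sq1_pow_even_mod8 c k h, one_mul, Nat.mod_mod]

lemma two_pow_mod8 (s : ℕ) (hs : 3 ≤ s) : 2 ^ s % 8 = 0 := by
  obtain ⟨t, rfl⟩ : ∃ t, s = t + 3 := ⟨s - 3, by omega⟩
  rw [pow_add]
  simp [Nat.mul_mod]

lemma aux_sq (x s : ℕ) (hx : 3 ≤ x) (h : x ^ 2 = 2 ^ s + 1) : x = 3 := by
  obtain ⟨y, rfl⟩ : ∃ y, x = y + 3 := ⟨x - 3, by omega⟩
  have e : (y + 3) ^ 2 = (y + 2) * (y + 4) + 1 := by ring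
  rw [e] at h
  have hd : (y + 2) * (y + 4) = 2 ^ s := Nat.add_right_cancel h
  have d1 : (y + 2) ∣ 2 ^ s := ⟨y + 4, hd.symm⟩
  have d2 : (y + 4) ∣ 2 ^ s := ⟨y + 2, by rw [← hd]; ring⟩
  obtain ⟨i, hi, hxi⟩ := (Nat.dvd_prime_pow Nat.prime_two).mp d1
  obtain ⟨j, hj, hxj⟩ := (Nat.dvd_prime_pow Nat.prime_two).mp d2
  have hji : 2 ^ j = 2 ^ i + 2 := by omega
  by_cases hi2 : 2 ≤ i
  · have h4 : (4 : ℕ) ≤ 2 ^ i := by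
      calc (4 : ℕ) = 2 ^ 2 := rfl
      _ ≤ 2 ^ i := Nat.pow_le_pow_right (by norm_num) hi2
    have h4d : (4 : ℕ) ∣ 2 ^ i := by
      have := pow_dvd_pow 2 hi2; simpa using this
    have hj3 : 3 ≤ j := by
      by_contra hc
      push_neg at hc
      interval_cases j <;> norm_num at hji <;> omega
    have h8 : (8 : ℕ) ∣ 2 ^ j := by
      have := pow_dvd_pow 2 hj3; simpa using this
    omega
  · have hi1 : i = 0 ∨ i = 1 := by omega
    rcases hi1 with rfl | rfl
    · norm_num at hxi
      omega
    · norm_num at hxi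
      omega

theorem catalan_two_three_five (a b r s : ℕ)
    (ha : a ∈ ({2, 3, 5} : Set ℕ)) (hb : b ∈ ({2, 3, 5} : Set ℕ))
    (hr : 0 < r) (hs : 0 < s) (h : a ^ r = b ^ s + 1) :
    (a, r, b, s) = (3, 1, 2, 1) ∨ (a, r, b, s) = (2, 2, 3, 1) ∨
      (a, r, b, s) = (5, 1, 2, 2) ∨ (a, r, b, s) = (3, 2, 2, 3) := by
  simp only [Set.mem_insert_iff, Set.mem_singleton_iff] at ha hb
  have h3sq : (3 : ℕ) ^ 2 % 8 = 1 := by norm_num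
  have h5sq : (5 : ℕ) ^ 2 % 8 = 1 := by norm_num
  rcases ha with rfl | rfl | rfl <;> rcases hb with rfl | rfl | rfl
  · -- a = 2, b = 2
    have d1 : 2 ∣ 2 ^ r := dvd_pow_self 2 hr.ne'
    have d2 : 2 ∣ 2 ^ s := dvd_pow_self 2 hs.ne'
    omega
  · -- a = 2, b = 3
    rcases Nat.lt_or_ge r 3 with h3 | h3
    · have hb3 : 3 ≤ 3 ^ s := Nat.le_self_pow hs.ne' 3
      interval_cases r
      · norm_num at h; omega
      · norm_num at h
        have hs1 : s = 1 := by
          have : (3 : ℕ) ^ s = 3 ^ 1 := by norm_num; omega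
          exact Nat.pow_right_injective (by norm_num) this
        subst hs1
        exact Or.inr (Or.inl rfl)
    · have h0 := two_pow_mod8 r h3
      rcases Nat.even_or_odd s with ⟨k, rfl⟩ | ⟨k, rfl⟩
      · have := sq1_pow_even_mod8 3 k h3sq
        rw [show k + k = 2 * k from by ring] at h
        omega
      · have := sq1_pow_odd_mod8 3 k h3sq
        generalize 3 ^ (2 * k + 1) = X at h this
        omega
  · -- a = 2, b = 5
    rcases Nat.lt_or_ge r 3 with h3 | h3
    · have hb5 : 5 ≤ 5 ^ s := Nat.le_self_pow hs.ne' 5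
      interval_cases r <;> norm_num at h <;> omega
    · have h0 := two_pow_mod8 r h3
      rcases Nat.even_or_odd s with ⟨k, rfl⟩ | ⟨k, rfl⟩
      · have := sq1_pow_even_mod8 5 k h5sq
        rw [show k + k = 2 * k from by ring] at h
        omega
      · have := sq1_pow_odd_mod8 5 k h5sq
        generalize 5 ^ (2 * k + 1) = X at h this
        omega
  · -- a = 3, b = 2
    rcases Nat.lt_or_ge s 3 with h3 | h3
    · have ha3 : 3 ≤ 3 ^ r := Nat.le_self_pow hr.ne' 3
      interval_cases s
      · norm_num at h
        have hr1 : r = 1 := by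
          have : (3 : ℕ) ^ r = 3 ^ 1 := by norm_num; omega
          exact Nat.pow_right_injective (by norm_num) this
        subst hr1
        exact Or.inl rfl
      · norm_num at h
        rcases Nat.lt_or_ge r 2 with h2 | h2
        · interval_cases r <;> omega
        · have : (9 : ℕ) ≤ 3 ^ r := by
            calc (9 : ℕ) = 3 ^ 2 := rfl
            _ ≤ 3 ^ r := Nat.pow_le_pow_right (by norm_num) h2
          omega
    · have h0 := two_pow_mod8 s h3
      rcases Nat.even_or_odd r with ⟨k, rfl⟩ | ⟨k, rfl⟩
      · have hk1 : 1 ≤ k := by omega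
        have h2 : (3 ^ k) ^ 2 = 2 ^ s + 1 := by
          rw [← h]; ring
        have hx : 3 ≤ 3 ^ k := by
          calc (3 : ℕ) = 3 ^ 1 := rfl
          _ ≤ 3 ^ k := Nat.pow_le_pow_right (by norm_num) hk1
        have hx3 := aux_sq (3 ^ k) s hx h2
        have hk : k = 1 := Nat.pow_right_injective (by norm_num)
          (by rw [hx3, pow_one] : (3 : ℕ) ^ k = 3 ^ 1)
        subst hk
        norm_num at h
        have hs3 : s = 3 := by
          have : (2 : ℕ) ^ s = 2 ^ 3 := by norm_num; omega
          exact Nat.pow_right_injective (by norm_num) this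
        subst hs3
        exact Or.inr (Or.inr (Or.inr rfl))
      · have := sq1_pow_odd_mod8 3 k h3sq
        generalize 3 ^ (2 * k + 1) = X at h this
        omega
  · -- a = 3, b = 3
    have d1 : 3 ∣ 3 ^ r := dvd_pow_self 3 hr.ne'
    have d2 : 3 ∣ 3 ^ s := dvd_pow_self 3 hs.ne'
    omega
  · -- a = 3, b = 5
    have h1 : 3 ^ r % 2 = 1 := by rw [Nat.pow_mod]; norm_num
    have h2 : 5 ^ s % 2 = 1 := by rw [Nat.pow_mod]; norm_num
    omega
  · -- a = 5, b = 2
    rcases Nat.lt_or_ge s 3 with h3 | h3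
    · have ha5 : 5 ≤ 5 ^ r := Nat.le_self_pow hr.ne' 5
      interval_cases s
      · norm_num at h; omega
      · norm_num at h
        have hr1 : r = 1 := by
          have : (5 : ℕ) ^ r = 5 ^ 1 := by norm_num; omega
          exact Nat.pow_right_injective (by norm_num) this
        subst hr1
        exact Or.inr (Or.inr (Or.inl rfl))
    · have h0 := two_pow_mod8 s h3
      rcases Nat.even_or_odd r with ⟨k, rfl⟩ | ⟨k, rfl⟩
      · have hk1 : 1 ≤ k := by omega
        have h2 : (5 ^ k) ^ 2 = 2 ^ s + 1 := by
          rw [← h]; ring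
        have hx : 3 ≤ 5 ^ k := by
          calc (3 : ℕ) ≤ 5 ^ 1 := by norm_num
          _ ≤ 5 ^ k := Nat.pow_le_pow_right (by norm_num) hk1
        have hx3 := aux_sq (5 ^ k) s hx h2
        have : (5 : ℕ) ≤ 5 ^ k := by
          calc (5 : ℕ) = 5 ^ 1 := rfl
          _ ≤ 5 ^ k := Nat.pow_le_pow_right (by norm_num) hk1
        omega
      · have := sq1_pow_odd_mod8 5 k h5sq
        generalize 5 ^ (2 * k + 1) = X at h this
        omega
  · -- a = 5, b = 3
    have h1 : 5 ^ r % 2 = 1 := by rw [Nat.pow_mod]; norm_num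
    have h2 : 3 ^ s % 2 = 1 := by rw [Nat.pow_mod]; norm_num
    omega
  · -- a = 5, b = 5
    have d1 : 5 ∣ 5 ^ r := dvd_pow_self 5 hr.ne'
    have d2 : 5 ∣ 5 ^ s := dvd_pow_self 5 hs.ne'
    omega
end

section
/- Let r, s, t be positive integers with 2^r + 3^s = 5^t. Then (r, s, t) ∈ {(1,1,1), (4,2,2)}; that is, the only solutions are 2+3=5 and 2⁴+3²=5². -/
/-!
For `r ≥ 3`, reduction modulo 8 makes `s = 2b` and `t = 2c` even, so
`2 ^ r = (5 ^ c - 3 ^ b) (5 ^ c + 3 ^ b)` is a product of two powers of two whose difference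
`2 · 3 ^ b` is `2` modulo 4; hence `5 ^ c = 3 ^ b + 2`. Together with the case `r = 1`, everything
reduces to `2 + 3 ^ s = 5 ^ t`, whose only solution is `s = t = 1`: for `s ≥ 2`, working modulo 9
forces `t ≡ 5 (mod 6)`, which is incompatible with the equation modulo 28. The case `r = 2` fails
modulo 3 and 8.
-/

theorem eq_add_two_of_sq_add_two_pow_eq_sq {x y n : ℕ} (hy : Odd y) (h : y ^ 2 + 2 ^ n = x ^ 2) :
    x = y + 2 := by
  have hfac : (x + y) * (x - y) = 2 ^ n := by rw [← Nat.sq_sub_sq, ← h, Nat.add_sub_cancel_left]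
  obtain ⟨i, -, hi⟩ := (Nat.dvd_prime_pow Nat.prime_two).1 (Dvd.intro_left _ hfac)
  obtain ⟨j, -, hj⟩ := (Nat.dvd_prime_pow Nat.prime_two).1 (Dvd.intro _ hfac)
  have hyx : y < x := Nat.lt_of_sub_pos (hi ▸ Nat.two_pow_pos i)
  obtain ⟨m, rfl⟩ := hy
  obtain rfl | rfl | hi2 : i = 0 ∨ i = 1 ∨ 2 ≤ i := by omega
  · rcases j with _ | j
    · omega
    · rw [pow_succ] at hj
      omega
  · omega
  · have hij : i ≤ j := (Nat.pow_le_pow_iff_right one_lt_two).1 (by omega)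
    have h4i : 2 ^ 2 ∣ x - (2 * m + 1) := hi ▸ Nat.pow_dvd_pow 2 hi2
    have h4j : 2 ^ 2 ∣ x + (2 * m + 1) := hj ▸ Nat.pow_dvd_pow 2 (hi2.trans hij)
    omega

theorem eq_one_of_two_add_three_pow_eq_five_pow {s t : ℕ} (h : 2 + 3 ^ s = 5 ^ t) :
    s = 1 ∧ t = 1 := by
  have hmod (n : ℕ) : (2 + 3 ^ s : ZMod n) = 5 ^ t := by exact_mod_cast congrArg Nat.cast h
  obtain rfl | rfl | hs : s = 0 ∨ s = 1 ∨ 2 ≤ s := by omega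
  · rcases t with _ | t
    · simp at h
    · rw [pow_succ] at h
      omega
  · exact ⟨rfl, (Nat.pow_eq_self_iff (by norm_num : 1 < 5)).1 (by simpa using h.symm)⟩
  · exfalso
    have h28 : (2 + 3 ^ (s % 6) : ZMod 28) = 5 ^ (t % 6) := by
      rw [← pow_eq_pow_mod s (by decide), ← pow_eq_pow_mod t (by decide)]
      exact hmod 28
    have h9 : (5 : ZMod 9) ^ (t % 6) = 2 := by
      have := hmod 9
      rwa [pow_eq_zero_of_le hs (by decide : (3 : ZMod 9) ^ 2 = 0), add_zero, eq_comm,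
        pow_eq_pow_mod t (by decide : (5 : ZMod 9) ^ 6 = 1)] at this
    have key : ∀ a < 6, ∀ b < 6, (2 + 3 ^ a : ZMod 28) = 5 ^ b → (5 : ZMod 9) ^ b ≠ 2 := by
      decide
    exact key _ (Nat.mod_lt s (by norm_num)) _ (Nat.mod_lt t (by norm_num)) h28 h9

theorem four_add_three_pow_ne_five_pow {s t : ℕ} (hs : 0 < s) : 4 + 3 ^ s ≠ 5 ^ t := by
  intro h
  have hmod (n : ℕ) : (4 + 3 ^ s : ZMod n) = 5 ^ t := by exact_mod_cast congrArg Nat.cast h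
  have h8 : (4 + 3 ^ (s % 2) : ZMod 8) = 5 ^ (t % 2) := by
    rw [← pow_eq_pow_mod s (by decide), ← pow_eq_pow_mod t (by decide)]
    exact hmod 8
  have h3 : (5 : ZMod 3) ^ (t % 2) = 1 := by
    have := hmod 3
    rwa [pow_eq_zero_of_le hs (by decide : (3 : ZMod 3) ^ 1 = 0), add_zero, eq_comm,
      pow_eq_pow_mod t (by decide : (5 : ZMod 3) ^ 2 = 1)] at this
  have key : ∀ a < 2, ∀ b < 2, (4 + 3 ^ a : ZMod 8) = 5 ^ b → (5 : ZMod 3) ^ b ≠ 1 := by decide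
  exact key _ (Nat.mod_lt s (by norm_num)) _ (Nat.mod_lt t (by norm_num)) h8 h3

theorem even_of_two_pow_add_three_pow_eq_five_pow {r s t : ℕ} (hr : 3 ≤ r)
    (h : 2 ^ r + 3 ^ s = 5 ^ t) : Even s ∧ Even t := by
  have h8 : (2 ^ r + 3 ^ s : ZMod 8) = 5 ^ t := by exact_mod_cast congrArg Nat.cast h
  rw [pow_eq_zero_of_le hr (by decide : (2 : ZMod 8) ^ 3 = 0), zero_add,
    pow_eq_pow_mod s (by decide : (3 : ZMod 8) ^ 2 = 1),
    pow_eq_pow_mod t (by decide : (5 : ZMod 8) ^ 2 = 1)] at h8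
  have key : ∀ a < 2, ∀ b < 2, (3 : ZMod 8) ^ a = 5 ^ b → a = 0 ∧ b = 0 := by decide
  obtain ⟨hs, ht⟩ := key _ (Nat.mod_lt s (by norm_num)) _ (Nat.mod_lt t (by norm_num)) h8
  exact ⟨Nat.even_iff.2 hs, Nat.even_iff.2 ht⟩

theorem two_pow_add_three_pow_eq_five_pow_general (r s t : ℕ)
    (hr : 0 < r) (hs : 0 < s) (h : 2 ^ r + 3 ^ s = 5 ^ t) :
    (r, s, t) = (1, 1, 1) ∨ (r, s, t) = (4, 2, 2) := by
  obtain rfl | rfl | hr3 : r = 1 ∨ r = 2 ∨ 3 ≤ r := by omega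
  · obtain ⟨rfl, rfl⟩ := eq_one_of_two_add_three_pow_eq_five_pow (by simpa using h)
    exact Or.inl rfl
  · exact absurd (by simpa using h) (four_add_three_pow_ne_five_pow hs)
  · obtain ⟨⟨b, rfl⟩, ⟨c, rfl⟩⟩ := even_of_two_pow_add_three_pow_eq_five_pow hr3 h
    have hsq : (3 ^ b) ^ 2 + 2 ^ r = (5 ^ c) ^ 2 := by
      rw [← pow_mul, ← pow_mul, mul_two, mul_two, ← h, add_comm]
    have hbc := eq_add_two_of_sq_add_two_pow_eq_sq (Odd.pow (by decide)) hsq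
    obtain ⟨rfl, rfl⟩ := eq_one_of_two_add_three_pow_eq_five_pow (by omega : 2 + 3 ^ b = 5 ^ c)
    obtain rfl : r = 4 := Nat.pow_right_injective le_rfl (by omega : 2 ^ r = 2 ^ 4)
    exact Or.inr rfl

theorem two_pow_add_three_pow_eq_five_pow (r s t : ℕ)
    (hr : 0 < r) (hs : 0 < s) (ht : 0 < t) (h : 2 ^ r + 3 ^ s = 5 ^ t) :
    (r, s, t) = (1, 1, 1) ∨ (r, s, t) = (4, 2, 2) :=
  two_pow_add_three_pow_eq_five_pow_general r s t hr hs h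
end

section
/- Let r, t be positive integers and s a nonnegative integer with 2^r + 5^s = 3^t. Then (r, s, t) ∈ {(1,0,1), (1,2,3), (2,1,2), (3,0,2)}; that is, the only solutions are 2+1=3, 2+25=27, 4+5=9 and 8+1=9. -/
set_option maxRecDepth 10000
set_option exponentiation.threshold 700

/-- periodicity of powers mod n -/
lemma pmp (b n k t : ℕ) (hk : b ^ k % n = 1) : b ^ t % n = b ^ (t % k) % n := by
  conv_lhs => rw [← Nat.div_add_mod t k]
  rw [pow_add, pow_mul, Nat.mul_mod, Nat.pow_mod, hk, one_pow, ← Nat.mul_mod, one_mul]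

theorem two_pow_add_five_pow_eq_three_pow (r t : ℕ) (s : ℕ)
    (hr : 0 < r) (ht : 0 < t) (h : 2 ^ r + 5 ^ s = 3 ^ t) :
    (r, s, t) = (1, 0, 1) ∨ (r, s, t) = (1, 2, 3) ∨
      (r, s, t) = (2, 1, 2) ∨ (r, s, t) = (3, 0, 2) := by
  have h3t : (3:ℕ) ∣ 3 ^ t := dvd_pow_self 3 ht.ne'
  rcases (show r = 1 ∨ r = 2 ∨ r = 3 ∨ 4 ≤ r by omega) with rfl | rfl | rfl | hr4
  · -- r = 1
    rcases (show s = 0 ∨ s = 1 ∨ s = 2 ∨ 3 ≤ s by omega) with rfl | rfl | rfl | hs3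
    · -- s = 0 : 3 = 3^t
      have h' : (3:ℕ) ^ t = 3 ^ 1 := by norm_num at h ⊢; omega
      have ht1 : t = 1 := Nat.pow_right_injective (by norm_num) h'
      subst ht1; left; rfl
    · -- s = 1 : 7 = 3^t, impossible
      norm_num at h; omega
    · -- s = 2 : 27 = 3^t
      have h' : (3:ℕ) ^ t = 3 ^ 3 := by norm_num at h ⊢; omega
      have ht3 : t = 3 := Nat.pow_right_injective (by norm_num) h'
      subst ht3; right; left; rfl
    · -- s ≥ 3 : contradiction
      exfalso
      obtain ⟨s', rfl⟩ : ∃ s', s = 3 + s' := ⟨s - 3, by omega⟩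
      have h125 : 3 ^ t % 125 = 2 := by
        rw [← h, pow_add]
        norm_num [Nat.add_mul_mod_self_left]
      rw [pmp 3 125 100 t (by decide)] at h125
      have h43 : t % 100 = 43 := by
        have key : ∀ a, a < 100 → 3 ^ a % 125 = 2 → a = 43 := by decide
        exact key _ (Nat.mod_lt _ (by norm_num)) h125
      have h300 : t % 300 % 100 = 43 := by
        rw [Nat.mod_mod_of_dvd t (by norm_num : (100:ℕ) ∣ 300)]; exact h43
      have e : (2 + 5 ^ ((3 + s') % 12)) % 601 = 3 ^ (t % 300) % 601 := by
        conv_lhs => rw [Nat.add_mod, ← pmp 5 601 12 (3 + s') (by decide), ← Nat.add_mod]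
        rw [← pmp 3 601 300 t (by decide), ← h]
        norm_num
      have key : ∀ a, a < 300 → a % 100 = 43 → ∀ b, b < 12 →
          (2 + 5 ^ b) % 601 ≠ 3 ^ a % 601 := by decide
      exact key _ (Nat.mod_lt _ (by norm_num)) h300 _ (Nat.mod_lt _ (by norm_num)) e
  · -- r = 2
    rcases (show s = 0 ∨ s = 1 ∨ 2 ≤ s by omega) with rfl | rfl | hs2
    · -- s = 0 : 5 = 3^t, impossible
      norm_num at h; omega
    · -- s = 1 : 9 = 3^t
      have h' : (3:ℕ) ^ t = 3 ^ 2 := by norm_num at h ⊢; omega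
      have ht2 : t = 2 := Nat.pow_right_injective (by norm_num) h'
      subst ht2; right; right; left; rfl
    · -- s ≥ 2 : contradiction
      exfalso
      obtain ⟨s', rfl⟩ : ∃ s', s = 2 + s' := ⟨s - 2, by omega⟩
      have h25 : 3 ^ t % 25 = 4 := by
        rw [← h, pow_add]
        norm_num [Nat.add_mul_mod_self_left]
      rw [pmp 3 25 20 t (by decide)] at h25
      have h6 : t % 20 = 6 := by
        have key : ∀ a, a < 20 → 3 ^ a % 25 = 4 → a = 6 := by decide
        exact key _ (Nat.mod_lt _ (by norm_num)) h25
      have h5 : t % 5 = 1 := by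
        rw [← Nat.mod_mod_of_dvd t (by norm_num : (5:ℕ) ∣ 20), h6]
      have e : (4 + 5 ^ ((2 + s') % 5)) % 11 = 3 ^ (t % 5) % 11 := by
        conv_lhs => rw [Nat.add_mod, ← pmp 5 11 5 (2 + s') (by decide), ← Nat.add_mod]
        rw [← pmp 3 11 5 t (by decide), ← h]
        norm_num
      rw [h5] at e
      have key : ∀ b, b < 5 → (4 + 5 ^ b) % 11 ≠ 3 ^ 1 % 11 := by decide
      exact key _ (Nat.mod_lt _ (by norm_num)) e
  · -- r = 3
    rcases (show s = 0 ∨ 1 ≤ s by omega) with rfl | hs1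
    · -- s = 0 : 9 = 3^t
      have h' : (3:ℕ) ^ t = 3 ^ 2 := by norm_num at h ⊢; omega
      have ht2 : t = 2 := Nat.pow_right_injective (by norm_num) h'
      subst ht2; right; right; right; rfl
    · -- s ≥ 1 : contradiction
      exfalso
      obtain ⟨s', rfl⟩ : ∃ s', s = 1 + s' := ⟨s - 1, by omega⟩
      have h5 : 3 ^ t % 5 = 3 := by
        rw [← h, pow_add]
        norm_num [Nat.add_mul_mod_self_left]
      rw [pmp 3 5 4 t (by decide)] at h5
      have h1 : t % 4 = 1 := by
        have key : ∀ a, a < 4 → 3 ^ a % 5 = 3 → a = 1 := by decide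
        exact key _ (Nat.mod_lt _ (by norm_num)) h5
      have e : (8 + 5 ^ ((1 + s') % 4)) % 16 = 3 ^ (t % 4) % 16 := by
        conv_lhs => rw [Nat.add_mod, ← pmp 5 16 4 (1 + s') (by decide), ← Nat.add_mod]
        rw [← pmp 3 16 4 t (by decide), ← h]
        norm_num
      rw [h1] at e
      have key : ∀ b, b < 4 → (8 + 5 ^ b) % 16 ≠ 3 ^ 1 % 16 := by decide
      exact key _ (Nat.mod_lt _ (by norm_num)) e
  · -- r ≥ 4 : contradiction
    exfalso
    obtain ⟨r', rfl⟩ : ∃ r', r = 4 + r' := ⟨r - 4, by omega⟩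
    rcases (show s = 0 ∨ 1 ≤ s by omega) with rfl | hs1
    · -- s = 0
      have h16 : 3 ^ t % 16 = 1 := by
        rw [← h, pow_add]
        norm_num [Nat.mul_add_mod]
      rw [pmp 3 16 4 t (by decide)] at h16
      have h0 : t % 4 = 0 := by
        have key : ∀ a, a < 4 → 3 ^ a % 16 = 1 → a = 0 := by decide
        exact key _ (Nat.mod_lt _ (by norm_num)) h16
      have e : (2 ^ ((4 + r') % 4) + 1) % 5 = 3 ^ (t % 4) % 5 := by
        conv_lhs => rw [Nat.add_mod, ← pmp 2 5 4 (4 + r') (by decide), ← Nat.add_mod]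
        rw [← pmp 3 5 4 t (by decide), ← h]
        norm_num
      rw [h0] at e
      have key : ∀ c, c < 4 → (2 ^ c + 1) % 5 ≠ 3 ^ 0 % 5 := by decide
      exact key _ (Nat.mod_lt _ (by norm_num)) e
    · -- s ≥ 1
      obtain ⟨s', rfl⟩ : ∃ s', s = 1 + s' := ⟨s - 1, by omega⟩
      obtain ⟨t', rfl⟩ : ∃ t', t = 1 + t' := ⟨t - 1, by omega⟩
      have e16 : 5 ^ ((1 + s') % 4) % 16 = 3 ^ ((1 + t') % 4) % 16 := by
        rw [← pmp 5 16 4 _ (by decide), ← pmp 3 16 4 _ (by decide), ← h, pow_add 2 4 r']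
        norm_num [Nat.mul_add_mod]
      have e5 : 2 ^ ((4 + r') % 4) % 5 = 3 ^ ((1 + t') % 4) % 5 := by
        rw [← pmp 2 5 4 _ (by decide), ← pmp 3 5 4 _ (by decide), ← h, pow_add 5 1 s']
        norm_num [Nat.add_mul_mod_self_left]
      have e3 : (2 ^ ((4 + r') % 2) + 5 ^ ((1 + s') % 2)) % 3 = 0 := by
        conv_lhs => rw [Nat.add_mod, ← pmp 2 3 2 (4 + r') (by decide),
          ← pmp 5 3 2 (1 + s') (by decide), ← Nat.add_mod]
        rw [h, pow_add]
        norm_num [Nat.mul_mod_right]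
      have hrm : (4 + r') % 4 % 2 = (4 + r') % 2 :=
        Nat.mod_mod_of_dvd _ (by norm_num)
      have hsm : (1 + s') % 4 % 2 = (1 + s') % 2 :=
        Nat.mod_mod_of_dvd _ (by norm_num)
      have key : ∀ a, a < 4 → ∀ b, b < 4 → ∀ c, c < 4 →
          ¬(5 ^ b % 16 = 3 ^ a % 16 ∧ 2 ^ c % 5 = 3 ^ a % 5 ∧
          (2 ^ (c % 2) + 5 ^ (b % 2)) % 3 = 0) := by decide
      exact key _ (Nat.mod_lt _ (by norm_num)) _ (Nat.mod_lt _ (by norm_num))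
        _ (Nat.mod_lt _ (by norm_num)) ⟨e16, e5, by rw [hrm, hsm]; exact e3⟩
end

section
/- Let r, s, t be positive integers with 2^r·3^s − 5^t = ±1. Then (r, s, t) ∈ {(1,1,1), (3,1,2)}; that is, the only solutions are 2·3 − 5 = 1 and 2³·3 − 5² = −1. -/
lemma pow_mod_cycle (a n k t : ℕ) (h : a ^ n % k = 1 % k) :
    a ^ t % k = a ^ (t % n) % k := by
  conv_lhs => rw [← Nat.div_add_mod t n, pow_add, pow_mul]
  have h1 : (a ^ n) ^ (t / n) % k = 1 % k := by
    rw [Nat.pow_mod, h, ← Nat.pow_mod, one_pow]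
  rw [Nat.mul_mod, h1, ← Nat.mul_mod, one_mul]

theorem two_pow_mul_three_pow_sub_five_pow (r s t : ℕ)
    (hr : 0 < r) (hs : 0 < s) (ht : 0 < t)
    (h : 2 ^ r * 3 ^ s = 5 ^ t + 1 ∨ 2 ^ r * 3 ^ s + 1 = 5 ^ t) :
    (r, s, t) = (1, 1, 1) ∨ (r, s, t) = (3, 1, 2) := by
  rcases h with h | h
  · -- Case A : 2^r * 3^s = 5^t + 1
    left
    have h5t4 : 5 ^ t % 4 = 1 := by rw [Nat.pow_mod]; norm_num
    have hr1 : r = 1 := by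
      by_contra hne
      have hr2 : 2 ≤ r := by omega
      have h4 : (4 : ℕ) ∣ 2 ^ r * 3 ^ s := by
        have : (2:ℕ)^2 ∣ 2 ^ r := pow_dvd_pow 2 hr2
        exact dvd_mul_of_dvd_left (by norm_num at this ⊢; exact this) _
      omega
    have hs1 : s = 1 := by
      by_contra hne
      have hs2 : 2 ≤ s := by
        omega
      have h9 : (9 : ℕ) ∣ 2 ^ r * 3 ^ s := by
        have : (3:ℕ)^2 ∣ 3 ^ s := pow_dvd_pow 3 hs2
        exact dvd_mul_of_dvd_right (by norm_num at this ⊢; exact this) _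
      have cyc9 : 5 ^ t % 9 = 5 ^ (t % 6) % 9 := pow_mod_cycle 5 6 9 t (by norm_num)
      have ht6 : t % 6 = 3 := by
        have hlt : t % 6 < 6 := Nat.mod_lt _ (by norm_num)
        set m := t % 6 with hm
        interval_cases m <;> norm_num at cyc9 <;> omega
      have cyc7 : 5 ^ t % 7 = 5 ^ (t % 6) % 7 := pow_mod_cycle 5 6 7 t (by norm_num)
      rw [ht6] at cyc7
      norm_num at cyc7
      have h7 : (7 : ℕ) ∣ 2 ^ r * 3 ^ s := by omega
      rcases (Nat.Prime.dvd_mul (by norm_num)).mp h7 with h7' | h7' <;>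
        have := Nat.Prime.dvd_of_dvd_pow (p := 7) (by norm_num) h7' <;> omega
    subst hr1; subst hs1
    have h5 : (5:ℕ) ^ t = 5 ^ 1 := by norm_num at h ⊢; omega
    have := Nat.pow_right_injective (by norm_num : 2 ≤ 5) h5
    simp [this]
  · -- Case B : 2^r * 3^s + 1 = 5^t
    right
    have cyc3 : 5 ^ t % 3 = 5 ^ (t % 2) % 3 := pow_mod_cycle 5 2 3 t (by norm_num)
    have h3 : (3 : ℕ) ∣ 2 ^ r * 3 ^ s :=
      dvd_mul_of_dvd_right (dvd_pow_self 3 hs.ne') _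
    have ht2 : t % 2 = 0 := by
      rcases Nat.mod_two_eq_zero_or_one t with h0 | h1
      · exact h0
      · rw [h1] at cyc3; norm_num at cyc3; omega
    obtain ⟨u, rfl⟩ : ∃ u, t = 2 * u := ⟨t / 2, by omega⟩
    have hu : 1 ≤ u := by omega
    have hx5 : 5 ≤ 5 ^ u := by
      calc (5:ℕ) = 5 ^ 1 := (pow_one 5).symm
        _ ≤ 5 ^ u := Nat.pow_le_pow_right (by norm_num) hu
    have hxx : 5 ^ u * 5 ^ u = 5 ^ (2 * u) := by
      rw [← pow_add]; ring_nf
    have hfac : 2 ^ r * 3 ^ s = (5 ^ u - 1) * (5 ^ u + 1) := by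
      obtain ⟨y, hy⟩ : ∃ y, 5 ^ u = y + 1 := ⟨5 ^ u - 1, by omega⟩
      have h1 : (5 ^ u - 1) * (5 ^ u + 1) + 1 = 5 ^ u * 5 ^ u := by
        rw [hy]; simp; ring
      omega
    have cycu3 : 5 ^ u % 3 = 5 ^ (u % 2) % 3 := pow_mod_cycle 5 2 3 u (by norm_num)
    have cycu8 : 5 ^ u % 8 = 5 ^ (u % 2) % 8 := pow_mod_cycle 5 2 8 u (by norm_num)
    rcases Nat.mod_two_eq_zero_or_one u with hu2 | hu2
    · -- u even : contradiction
      exfalso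
      rw [hu2] at cycu3 cycu8
      norm_num at cycu3 cycu8
      have hdvd : (5 ^ u + 1) ∣ 2 ^ r * 3 ^ s := hfac ▸ dvd_mul_left _ _
      have hnd3 : ¬ (3 ∣ (5 ^ u + 1)) := by omega
      have hcop : Nat.Coprime (5 ^ u + 1) (3 ^ s) :=
        Nat.Coprime.pow_right _
          (Nat.coprime_comm.mp ((Nat.prime_three.coprime_iff_not_dvd).mpr hnd3))
      have hdvd2 : (5 ^ u + 1) ∣ 2 ^ r := hcop.dvd_of_dvd_mul_right hdvd
      obtain ⟨k, hk, hxk⟩ := (Nat.dvd_prime_pow Nat.prime_two).mp hdvd2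
      have hk3 : k < 3 := by
        by_contra hk3
        have : (2:ℕ)^3 ∣ 2 ^ k := pow_dvd_pow 2 (by omega)
        norm_num at this
        omega
      interval_cases k <;> norm_num at hxk <;> omega
    · -- u odd
      rw [hu2] at cycu3 cycu8
      norm_num at cycu3 cycu8
      have hdvd : (5 ^ u - 1) ∣ 2 ^ r * 3 ^ s := hfac ▸ dvd_mul_right _ _
      have hnd3 : ¬ (3 ∣ (5 ^ u - 1)) := by omega
      have hcop : Nat.Coprime (5 ^ u - 1) (3 ^ s) :=
        Nat.Coprime.pow_right _
          (Nat.coprime_comm.mp ((Nat.prime_three.coprime_iff_not_dvd).mpr hnd3))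
      have hdvd2 : (5 ^ u - 1) ∣ 2 ^ r := hcop.dvd_of_dvd_mul_right hdvd
      obtain ⟨k, hk, hxk⟩ := (Nat.dvd_prime_pow Nat.prime_two).mp hdvd2
      have hk3 : k < 3 := by
        by_contra hk3
        have : (2:ℕ)^3 ∣ 2 ^ k := pow_dvd_pow 2 (by omega)
        norm_num at this
        omega
      have hx5' : 5 ^ u = 5 := by
        interval_cases k <;> norm_num at hxk <;> omega
      have hu1 : u = 1 := by
        have : (5:ℕ) ^ u = 5 ^ 1 := by rw [hx5']; norm_num
        exact Nat.pow_right_injective (by norm_num : 2 ≤ 5) this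
      subst hu1
      norm_num at h
      have h24 : 2 ^ r * 3 ^ s = 24 := by omega
      have hr4 : r ≤ 4 := by
        by_contra hr4
        have h32 : (32:ℕ) ≤ 2 ^ r := by
          calc (32:ℕ) = 2 ^ 5 := by norm_num
            _ ≤ 2 ^ r := Nat.pow_le_pow_right (by norm_num) (by omega)
        have : 2 ^ r ≤ 24 := Nat.le_of_dvd (by norm_num) ⟨3 ^ s, h24.symm⟩
        omega
      have hs2 : s ≤ 2 := by
        by_contra hs2
        have h27 : (27:ℕ) ≤ 3 ^ s := by
          calc (27:ℕ) = 3 ^ 3 := by norm_num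
            _ ≤ 3 ^ s := Nat.pow_le_pow_right (by norm_num) (by omega)
        have : 3 ^ s ≤ 24 := Nat.le_of_dvd (by norm_num)
          ⟨2 ^ r, by rw [mul_comm]; exact h24.symm⟩
        omega
      have : r = 3 ∧ s = 1 := by
        interval_cases r <;> interval_cases s <;> norm_num at h24 <;> omega
      simp [this.1, this.2]
end

section
/- Let r, s, t be positive integers with 3^r·5^s − 2^t = ±1. Then (r, s, t) = (1,1,4); that is, the only solution is 3·5 − 2⁴ = −1. -/
private lemma pow_odd_of_sq_eq_one {M : Type*} [Monoid M] (a : M) (h : a ^ 2 = 1) (k : ℕ) :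
    a ^ (2 * k + 1) = a := by
  rw [pow_succ, pow_mul, h, one_pow, one_mul]

private lemma pow_even_of_sq_eq_one {M : Type*} [Monoid M] (a : M) (h : a ^ 2 = 1) (k : ℕ) :
    a ^ (2 * k) = 1 := by
  rw [pow_mul, h, one_pow]

private lemma sq_ne_two_pow_add_one (n t : ℕ) (hn : 4 ≤ n) (h : n * n = 2 ^ t + 1) : False := by
  obtain ⟨m, rfl⟩ : ∃ m, n = m + 1 := ⟨n - 1, by omega⟩
  have hm : 3 ≤ m := by omega
  have key : m * (m + 2) = 2 ^ t := by nlinarith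
  have h1 : m ∣ 2 ^ t := ⟨m + 2, key.symm⟩
  have h2 : m + 2 ∣ 2 ^ t := ⟨m, by rw [← key]; ring⟩
  obtain ⟨a, _, ha⟩ := (Nat.dvd_prime_pow Nat.prime_two).mp h1
  obtain ⟨b, _, hb⟩ := (Nat.dvd_prime_pow Nat.prime_two).mp h2
  have ha2 : 2 ≤ a := by
    by_contra hc
    interval_cases a <;> omega
  have hb2 : 2 ≤ b := by
    by_contra hc
    interval_cases b <;> omega
  have d1 : (4 : ℕ) ∣ m := by
    rw [ha]
    simpa using (pow_dvd_pow 2 ha2 : (2 : ℕ) ^ 2 ∣ 2 ^ a)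
  have d2 : (4 : ℕ) ∣ m + 2 := by
    rw [hb]
    simpa using (pow_dvd_pow 2 hb2 : (2 : ℕ) ^ 2 ∣ 2 ^ b)
  omega

theorem three_pow_mul_five_pow_sub_two_pow (r s t : ℕ)
    (hr : 0 < r) (hs : 0 < s) (ht : 0 < t)
    (h : 3 ^ r * 5 ^ s = 2 ^ t + 1 ∨ 3 ^ r * 5 ^ s + 1 = 2 ^ t) :
    (r, s, t) = (1, 1, 4) := by
  have h3r : (3 : ℕ) ≤ 3 ^ r := by
    calc (3 : ℕ) = 3 ^ 1 := (pow_one 3).symm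
    _ ≤ 3 ^ r := Nat.pow_le_pow_right (by norm_num) hr
  have h5s : (5 : ℕ) ≤ 5 ^ s := by
    calc (5 : ℕ) = 5 ^ 1 := (pow_one 5).symm
    _ ≤ 5 ^ s := Nat.pow_le_pow_right (by norm_num) hs
  have h15 : 15 ≤ 3 ^ r * 5 ^ s := by
    calc (15 : ℕ) = 3 * 5 := by norm_num
    _ ≤ 3 ^ r * 5 ^ s := Nat.mul_le_mul h3r h5s
  rcases h with h1 | h2
  · -- Case A : 3^r * 5^s = 2^t + 1, impossible
    exfalso
    have ht3 : 3 ≤ t := by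
      by_contra hc
      push_neg at hc
      interval_cases t <;> omega
    obtain ⟨t', rfl⟩ : ∃ t', t = 3 + t' := ⟨t - 3, by omega⟩
    -- r is even (mod 4)
    have hreven : Even r := by
      rcases Nat.even_or_odd r with he | ho
      · exact he
      · exfalso
        obtain ⟨k, rfl⟩ := ho
        have hc := congrArg (Nat.cast : ℕ → ZMod 4) h1
        push_cast at hc
        rw [pow_odd_of_sq_eq_one (3 : ZMod 4) (by decide) k,
          show (5 : ZMod 4) = 1 by decide, one_pow, mul_one,
          show (3 : ℕ) + t' = 2 + (1 + t') by ring, pow_add,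
          show (2 : ZMod 4) ^ 2 = 0 by decide, zero_mul] at hc
        revert hc; decide
    obtain ⟨a, hra⟩ := hreven
    have hra' : r = 2 * a := by omega
    -- s is even (mod 8)
    have hseven : Even s := by
      rcases Nat.even_or_odd s with he | ho
      · exact he
      · exfalso
        obtain ⟨k, rfl⟩ := ho
        have hc := congrArg (Nat.cast : ℕ → ZMod 8) h1
        push_cast at hc
        rw [hra', pow_even_of_sq_eq_one (3 : ZMod 8) (by decide) a,
          pow_odd_of_sq_eq_one (5 : ZMod 8) (by decide) k, one_mul,
          pow_add, show (2 : ZMod 8) ^ 3 = 0 by decide, zero_mul] at hc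
        revert hc; decide
    obtain ⟨b, hsb⟩ := hseven
    have ha1 : 1 ≤ a := by omega
    have hb1 : 1 ≤ b := by omega
    apply sq_ne_two_pow_add_one (3 ^ a * 5 ^ b) (3 + t') _ _
    · have h3a : (3 : ℕ) ≤ 3 ^ a := by
        calc (3 : ℕ) = 3 ^ 1 := (pow_one 3).symm
        _ ≤ 3 ^ a := Nat.pow_le_pow_right (by norm_num) ha1
      have h5b : (5 : ℕ) ≤ 5 ^ b := by
        calc (5 : ℕ) = 5 ^ 1 := (pow_one 5).symm
        _ ≤ 5 ^ b := Nat.pow_le_pow_right (by norm_num) hb1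
      calc (4 : ℕ) ≤ 3 * 5 := by norm_num
      _ ≤ 3 ^ a * 5 ^ b := Nat.mul_le_mul h3a h5b
    · rw [← h1, hra', hsb]
      ring
  · -- Case B : 3^r * 5^s + 1 = 2^t
    -- t is even (mod 3)
    have hteven : Even t := by
      rcases Nat.even_or_odd t with he | ho
      · exact he
      · exfalso
        obtain ⟨k, rfl⟩ := ho
        have hc := congrArg (Nat.cast : ℕ → ZMod 3) h2
        push_cast at hc
        rw [show (3 : ZMod 3) = 0 by decide, zero_pow hr.ne', zero_mul, zero_add,
          pow_odd_of_sq_eq_one (2 : ZMod 3) (by decide) k] at hc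
        revert hc; decide
    obtain ⟨u, htu⟩ := hteven
    have htu' : t = 2 * u := by omega
    have hu1 : 1 ≤ u := by omega
    obtain ⟨x, hxu⟩ : ∃ x, x + 1 = 2 ^ u := ⟨2 ^ u - 1, by
      have : 1 ≤ 2 ^ u := Nat.one_le_two_pow; omega⟩
    have h2t : (2 : ℕ) ^ t = (x + 1) * (x + 1) := by
      rw [htu', two_mul, pow_add, hxu]
    have hxy : x * (x + 2) = 3 ^ r * 5 ^ s := by nlinarith
    -- prime divisibility splits
    have h3d : (3 : ℕ) ∣ x * (x + 2) := by
      rw [hxy]; exact Dvd.dvd.mul_right (dvd_pow_self 3 hr.ne') _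
    have h5d : (5 : ℕ) ∣ x * (x + 2) := by
      rw [hxy]; exact Dvd.dvd.mul_left (dvd_pow_self 5 hs.ne') _
    have hxdvd : x ∣ 3 ^ r * 5 ^ s := ⟨x + 2, hxy.symm⟩
    have hx2dvd : x + 2 ∣ 3 ^ r * 5 ^ s := ⟨x, by rw [← hxy]; ring⟩
    rcases (Nat.Prime.dvd_mul Nat.prime_three).mp h3d with h3x | h3y <;>
      rcases (Nat.Prime.dvd_mul Nat.prime_five).mp h5d with h5x | h5y
    · -- 3 ∣ x, 5 ∣ x : then x+2 coprime to 15, so x+2 = 1, absurd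
      exfalso
      have hn3 : ¬ (3 : ℕ) ∣ x + 2 := by
        intro hd
        have := Nat.dvd_sub hd h3x
        omega
      have hn5 : ¬ (5 : ℕ) ∣ x + 2 := by
        intro hd
        have := Nat.dvd_sub hd h5x
        omega
      have hcop : Nat.Coprime (x + 2) (3 ^ r * 5 ^ s) :=
        Nat.Coprime.mul_right
          (((Nat.Prime.coprime_iff_not_dvd Nat.prime_three).mpr hn3).symm.pow_right r)
          (((Nat.Prime.coprime_iff_not_dvd Nat.prime_five).mpr hn5).symm.pow_right s)
      have h1' : x + 2 = 1 := hcop.eq_one_of_dvd hx2dvd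
      omega
    · -- 3 ∣ x, 5 ∣ x + 2 : x = 3^a, x+2 = 5^b
      have hn5 : ¬ (5 : ℕ) ∣ x := by
        intro hd
        have := Nat.dvd_sub h5y hd
        omega
      have hn3 : ¬ (3 : ℕ) ∣ x + 2 := by
        intro hd
        have := Nat.dvd_sub hd h3x
        omega
      have hx3p : x ∣ 3 ^ r :=
        (((Nat.Prime.coprime_iff_not_dvd Nat.prime_five).mpr hn5).symm.pow_right
          s).dvd_of_dvd_mul_right hxdvd
      have hy5p : x + 2 ∣ 5 ^ s :=
        (((Nat.Prime.coprime_iff_not_dvd Nat.prime_three).mpr hn3).symm.pow_right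
          r).dvd_of_dvd_mul_left hx2dvd
      obtain ⟨a, _, hxa⟩ := (Nat.dvd_prime_pow Nat.prime_three).mp hx3p
      obtain ⟨b, _, hyb⟩ := (Nat.dvd_prime_pow Nat.prime_five).mp hy5p
      have ha1 : 1 ≤ a := by
        rcases Nat.eq_zero_or_pos a with rfl | h
        · exfalso; rw [hxa] at h3x; norm_num at h3x
        · exact h
      have hb1 : 1 ≤ b := by
        rcases Nat.eq_zero_or_pos b with rfl | h
        · exfalso; rw [hyb] at h5y; norm_num at h5y
        · exact h
      have h5u : 5 ^ b = 2 ^ u + 1 := by rw [← hyb, ← hxu]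
      by_cases hu3 : 3 ≤ u
      · -- impossible : b even forced, then square contradiction
        exfalso
        have hbeven : Even b := by
          rcases Nat.even_or_odd b with he | ho
          · exact he
          · exfalso
            obtain ⟨k, rfl⟩ := ho
            have hc := congrArg (Nat.cast : ℕ → ZMod 8) h5u
            push_cast at hc
            obtain ⟨u', rfl⟩ : ∃ u', u = 3 + u' := ⟨u - 3, by omega⟩
            rw [pow_odd_of_sq_eq_one (5 : ZMod 8) (by decide) k,
              pow_add, show (2 : ZMod 8) ^ 3 = 0 by decide, zero_mul] at hc
            revert hc; decide
        obtain ⟨c, hbc⟩ := hbeven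
        have hc1 : 1 ≤ c := by omega
        apply sq_ne_two_pow_add_one (5 ^ c) u _ _
        · calc (4 : ℕ) ≤ 5 ^ 1 := by norm_num
          _ ≤ 5 ^ c := Nat.pow_le_pow_right (by norm_num) hc1
        · rw [← h5u, hbc, ← pow_add]
      · -- u ≤ 2
        interval_cases u
        · -- u = 1 : 5^b = 3
          exfalso
          have hd : (5 : ℕ) ∣ 5 ^ b := dvd_pow_self 5 (by omega : b ≠ 0)
          rw [h5u] at hd
          norm_num at hd
        · -- u = 2 : 5^b = 5
          have hb' : b = 1 := by
            have h5' : (5 : ℕ) ^ b = 5 ^ 1 := by rw [h5u]; norm_num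
            exact Nat.pow_right_injective (by norm_num) h5'
          subst hb'
          have hx3 : x = 3 := by omega
          have h15' : 3 ^ r * 5 ^ s = 15 := by rw [← hxy, hx3]
          have hr1 : r = 1 := by
            by_contra hc
            have hr2 : 2 ≤ r := by omega
            have h9 : (9 : ℕ) ∣ 3 ^ r := by simpa using (pow_dvd_pow 3 hr2 : (3 : ℕ) ^ 2 ∣ 3 ^ r)
            have : (9 : ℕ) ∣ 15 := h9.trans ⟨5 ^ s, h15'.symm⟩
            norm_num at this
          subst hr1
          have hs1 : s = 1 := by
            have h5' : (5 : ℕ) ^ s = 5 ^ 1 := by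
              have : 3 * 5 ^ s = 15 := by simpa using h15'
              omega
            exact Nat.pow_right_injective (by norm_num) h5'
          subst hs1
          have : t = 4 := by omega
          subst this
          rfl
    · -- 3 ∣ x + 2, 5 ∣ x : x = 5^b, x+2 = 3^a ; mod 4 kills it
      exfalso
      have hn3 : ¬ (3 : ℕ) ∣ x := by
        intro hd
        have := Nat.dvd_sub h3y hd
        omega
      have hx5p : x ∣ 5 ^ s :=
        (((Nat.Prime.coprime_iff_not_dvd Nat.prime_three).mpr hn3).symm.pow_right
          r).dvd_of_dvd_mul_left hxdvd
      obtain ⟨b, _, hxb⟩ := (Nat.dvd_prime_pow Nat.prime_five).mp hx5p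
      have hb1 : 1 ≤ b := by
        rcases Nat.eq_zero_or_pos b with rfl | h
        · exfalso; rw [hxb] at h5x; norm_num at h5x
        · exact h
      -- 5^b + 1 = 2^u
      have h5u : 5 ^ b + 1 = 2 ^ u := by omega
      have hu2 : 2 ≤ u := by
        by_contra hc
        interval_cases u
        · have : (5 : ℕ) ≤ 5 ^ b := by
            calc (5 : ℕ) = 5 ^ 1 := (pow_one 5).symm
            _ ≤ 5 ^ b := Nat.pow_le_pow_right (by norm_num) hb1
          omega
      have hc := congrArg (Nat.cast : ℕ → ZMod 4) h5u
      push_cast at hc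
      obtain ⟨u', rfl⟩ : ∃ u', u = 2 + u' := ⟨u - 2, by omega⟩
      rw [show (5 : ZMod 4) = 1 by decide, one_pow,
        pow_add, show (2 : ZMod 4) ^ 2 = 0 by decide, zero_mul] at hc
      revert hc; decide
    · -- 3 ∣ x+2, 5 ∣ x+2 : x coprime to 15, so x = 1, then x+2 = 3 not div by 5
      exfalso
      have hn3 : ¬ (3 : ℕ) ∣ x := by
        intro hd
        have := Nat.dvd_sub h3y hd
        omega
      have hn5 : ¬ (5 : ℕ) ∣ x := by
        intro hd
        have := Nat.dvd_sub h5y hd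
        omega
      have hcop : Nat.Coprime x (3 ^ r * 5 ^ s) :=
        Nat.Coprime.mul_right
          (((Nat.Prime.coprime_iff_not_dvd Nat.prime_three).mpr hn3).symm.pow_right r)
          (((Nat.Prime.coprime_iff_not_dvd Nat.prime_five).mpr hn5).symm.pow_right s)
      have hx1 : x = 1 := hcop.eq_one_of_dvd hxdvd
      rw [hx1] at h5y
      norm_num at h5y
end

section
/- Let r, s, t be positive integers with 2^r·5^s − 3^t = ±1. Then (r, s, t) ∈ {(1,1,2), (4,1,4)}; that is, the only solutions are 2·5 − 3² = 1 and 2⁴·5 − 3⁴ = −1. -/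
private lemma pow3_mod5 (t : ℕ) : 3 ^ t % 5 = 3 ^ (t % 4) % 5 := by
  conv_lhs => rw [← Nat.div_add_mod t 4]
  rw [pow_add, pow_mul, Nat.mul_mod, Nat.pow_mod]
  norm_num

private lemma five_t_lt (t : ℕ) (h : 3 ≤ t) : 5 * t < 3 ^ t := by
  induction t with
  | zero => omega
  | succ n ih =>
    rcases Nat.lt_or_ge n 3 with h3 | h3
    · interval_cases n <;> first | omega | norm_num
    · have := ih (by omega)
      have h1 : (27:ℕ) ≤ 3 ^ n := by
        calc (27:ℕ) = 3^3 := by norm_num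
        _ ≤ 3 ^ n := Nat.pow_le_pow_right (by norm_num) h3
      rw [pow_succ]
      omega

private lemma five_t2_lt (t : ℕ) (h : 5 ≤ t) : 5 * t ^ 2 + 1 < 3 ^ t := by
  induction t with
  | zero => omega
  | succ n ih =>
    rcases Nat.lt_or_ge n 5 with h3 | h3
    · interval_cases n <;> first | omega | norm_num
    · have := ih (by omega)
      rw [pow_succ 3 n]
      nlinarith [this, h3]

private lemma padic_eq (p a n : ℕ) [Fact p.Prime] (h1 : p ^ n ∣ a)
    (h2 : ¬ p ^ (n + 1) ∣ a) (ha : a ≠ 0) : padicValNat p a = n := by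
  have hle := (padicValNat_dvd_iff_le ha).mp h1
  have hlt : ¬ (n + 1 ≤ padicValNat p a) := fun hh => h2 ((padicValNat_dvd_iff_le ha).mpr hh)
  omega

theorem two_pow_mul_five_pow_sub_three_pow (r s t : ℕ)
    (hr : 0 < r) (hs : 0 < s) (ht : 0 < t)
    (h : 2 ^ r * 5 ^ s = 3 ^ t + 1 ∨ 2 ^ r * 5 ^ s + 1 = 3 ^ t) :
    (r, s, t) = (1, 1, 2) ∨ (r, s, t) = (4, 1, 4) := by
  have f2 : Fact (Nat.Prime 2) := ⟨by norm_num⟩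
  have f5 : Fact (Nat.Prime 5) := ⟨by norm_num⟩
  rcases h with h1 | h2
  · -- 2^r * 5^s = 3^t + 1
    left
    have h5 : (3 ^ t + 1) % 5 = 0 := by
      rw [← h1]
      have : (5:ℕ) ∣ 2 ^ r * 5 ^ s := Dvd.dvd.mul_left (dvd_pow_self 5 hs.ne') _
      omega
    have ht4 : t % 4 = 2 := by
      have hm := pow3_mod5 t
      have h4 : t % 4 < 4 := Nat.mod_lt t (by norm_num)
      interval_cases h : t % 4 <;> simp [h] at hm <;> omega
    obtain ⟨m, hmt⟩ : ∃ m, t = 2 * m := ⟨t / 2, by omega⟩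
    have hmodd : m % 2 = 1 := by omega
    have hmpos : 0 < m := by omega
    have h3t4 : 3 ^ t % 4 = 1 := by
      rw [hmt, pow_mul, Nat.pow_mod]; norm_num
    have hr1 : r = 1 := by
      by_contra hne
      have hr2 : 2 ≤ r := by omega
      have : (4:ℕ) ∣ 2 ^ r * 5 ^ s := Dvd.dvd.mul_right (by
        calc (4:ℕ) = 2^2 := by norm_num
        _ ∣ 2^r := pow_dvd_pow 2 hr2) _
      omega
    subst hr1
    have heq : 3 ^ t + 1 = 9 ^ m + 1 ^ m := by
      rw [hmt, pow_mul]; norm_num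
    have hval : padicValNat 5 (9 ^ m + 1 ^ m) =
        padicValNat 5 (9 + 1) + padicValNat 5 m :=
      padicValNat.pow_add_pow (by decide) (by norm_num) (by norm_num)
        (Nat.odd_iff.mpr hmodd)
    have hval10 : padicValNat 5 (9 + 1) = 1 :=
      padic_eq 5 10 1 (by norm_num) (by norm_num) (by norm_num)
    have hsle : s ≤ 1 + padicValNat 5 m := by
      have hdvd : 5 ^ s ∣ 3 ^ t + 1 := by
        rw [← h1]; exact Dvd.dvd.mul_left dvd_rfl _
      have hle := (padicValNat_dvd_iff_le (a := 3 ^ t + 1) (n := s) (by positivity)).mp hdvd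
      rwa [heq, hval, hval10] at hle
    have h5m : 5 ^ padicValNat 5 m ≤ m := Nat.le_of_dvd hmpos pow_padicValNat_dvd
    have hbound : 2 * 5 ^ s ≤ 5 * t := by
      have : (5:ℕ) ^ s ≤ 5 ^ (1 + padicValNat 5 m) := Nat.pow_le_pow_right (by norm_num) hsle
      rw [pow_add, pow_one] at this
      omega
    have ht2 : t = 2 := by
      by_contra hne
      have ht3 : 3 ≤ t := by omega
      have := five_t_lt t ht3
      rw [pow_one] at h1
      omega
    subst ht2
    have h10 : (5:ℕ) ^ s = 5 ^ 1 := by rw [pow_one] at h1 ⊢; omega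
    have hs1 : s = 1 := Nat.pow_right_injective (by norm_num) h10
    subst hs1
    rfl
  · -- 2^r * 5^s + 1 = 3^t
    right
    have h5 : 3 ^ t % 5 = 1 := by
      have : (5:ℕ) ∣ 2 ^ r * 5 ^ s := Dvd.dvd.mul_left (dvd_pow_self 5 hs.ne') _
      omega
    have ht4 : t % 4 = 0 := by
      have hm := pow3_mod5 t
      have h4 : t % 4 < 4 := Nat.mod_lt t (by norm_num)
      interval_cases h : t % 4 <;> simp [h] at hm <;> omega
    obtain ⟨m, hmt⟩ : ∃ m, t = 4 * m := ⟨t / 4, by omega⟩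
    have hmpos : 0 < m := by omega
    have hteven : Even t := ⟨2 * m, by omega⟩
    have hne : 3 ^ t - 1 ≠ 0 := by
      have : (1:ℕ) < 3 ^ t := by
        calc (1:ℕ) < 3 ^ 1 := by norm_num
        _ ≤ 3 ^ t := Nat.pow_le_pow_right (by norm_num) ht
      omega
    have h31 : 2 ^ r * 5 ^ s = 3 ^ t - 1 := by omega
    -- 2-adic valuation
    have hval2 : padicValNat 2 (3 ^ t - 1 ^ t) + 1 =
        padicValNat 2 (3 + 1) + padicValNat 2 (3 - 1) + padicValNat 2 t :=
      padicValNat.pow_two_sub_pow (by norm_num) (by norm_num) (by norm_num) ht.ne' hteven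
    have h4v : padicValNat 2 (3 + 1) = 2 :=
      padic_eq 2 4 2 (by norm_num) (by norm_num) (by norm_num)
    have h2v : padicValNat 2 (3 - 1) = 1 :=
      padic_eq 2 2 1 (by norm_num) (by norm_num) (by norm_num)
    have h1t : (1:ℕ) ^ t = 1 := one_pow t
    have hv2 : padicValNat 2 (3 ^ t - 1) = 2 + padicValNat 2 t := by
      rw [h1t] at hval2; omega
    -- 5-adic valuation
    have hval5 : padicValNat 5 (81 ^ m - 1 ^ m) =
        padicValNat 5 (81 - 1) + padicValNat 5 m :=
      padicValNat.pow_sub_pow (by decide) (by norm_num) (by norm_num) (by norm_num) hmpos.ne'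
    have h80v : padicValNat 5 (81 - 1) = 1 :=
      padic_eq 5 80 1 (by norm_num) (by norm_num) (by norm_num)
    have heq5 : 3 ^ t - 1 = 81 ^ m - 1 ^ m := by
      rw [hmt, pow_mul]; norm_num
    have hrle : r ≤ 2 + padicValNat 2 t := by
      have hdvd : 2 ^ r ∣ 3 ^ t - 1 := by
        rw [← h31]; exact Dvd.dvd.mul_right dvd_rfl _
      have hle := (padicValNat_dvd_iff_le (a := 3 ^ t - 1) (n := r) hne).mp hdvd
      omega
    have hsle : s ≤ 1 + padicValNat 5 m := by
      have hdvd : 5 ^ s ∣ 3 ^ t - 1 := by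
        rw [← h31]; exact Dvd.dvd.mul_left dvd_rfl _
      have hle := (padicValNat_dvd_iff_le (a := 3 ^ t - 1) (n := s) hne).mp hdvd
      rw [heq5, hval5, h80v] at hle
      omega
    have h2t : 2 ^ padicValNat 2 t ≤ t := Nat.le_of_dvd ht pow_padicValNat_dvd
    have h5m : 5 ^ padicValNat 5 m ≤ m := Nat.le_of_dvd hmpos pow_padicValNat_dvd
    have hb2 : 2 ^ r ≤ 4 * t := by
      have : (2:ℕ) ^ r ≤ 2 ^ (2 + padicValNat 2 t) := Nat.pow_le_pow_right (by norm_num) hrle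
      rw [pow_add] at this
      norm_num at this
      omega
    have hb5 : 5 ^ s ≤ 5 * m := by
      have : (5:ℕ) ^ s ≤ 5 ^ (1 + padicValNat 5 m) := Nat.pow_le_pow_right (by norm_num) hsle
      rw [pow_add, pow_one] at this
      omega
    have hbound : 3 ^ t ≤ 5 * t ^ 2 + 1 := by
      have hmul := Nat.mul_le_mul hb2 hb5
      have h20 : 4 * t * (5 * m) = 5 * t ^ 2 := by rw [hmt]; ring
      omega
    have ht4' : t = 4 := by
      by_contra hne'
      have h5t : 5 ≤ t := by omega
      have := five_t2_lt t h5t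
      omega
    subst ht4'
    have h80' : 2 ^ r * 5 ^ s = 80 := by omega
    have h2pos : 1 ≤ 2 ^ r := Nat.one_le_two_pow
    have h5pos : 1 ≤ 5 ^ s := Nat.one_le_pow _ _ (by norm_num)
    have hrlt : r < 7 := by
      by_contra hge
      have h128 : (2:ℕ) ^ 7 ≤ 2 ^ r := Nat.pow_le_pow_right (by norm_num) (by omega)
      nlinarith
    have hslt : s < 3 := by
      by_contra hge
      have h125 : (5:ℕ) ^ 3 ≤ 5 ^ s := Nat.pow_le_pow_right (by norm_num) (by omega)
      nlinarith
    interval_cases r <;> interval_cases s <;> revert h80' <;> decide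
end

section
/- Let u, v, m be integers with v > 0 and m ≥ 1, such that vj + u ≠ 0 for every 1 ≤ j ≤ m. Let p be a prime with p ∤ v such that p = v·i + u for some 1 ≤ i ≤ m, and assume 2p > vm + u and p + v + u > 0. Then the p-adic valuation of the product ∏_{j=1}^{m} (vj + u) equals 1, i.e., p divides the product exactly once. -/
theorem padicValInt_prod_eq_one (u v : ℤ) (m : ℕ) (hv : 0 < v) (hm : 1 ≤ m)
    (hne : ∀ j : ℕ, 1 ≤ j → j ≤ m → v * (j : ℤ) + u ≠ 0)
    (p : ℕ) (hp : p.Prime) (hpv : ¬ ((p : ℤ) ∣ v))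
    (hpi : ∃ i : ℕ, 1 ≤ i ∧ i ≤ m ∧ (p : ℤ) = v * (i : ℤ) + u)
    (h2p : v * (m : ℤ) + u < 2 * (p : ℤ))
    (hpos : 0 < (p : ℤ) + v + u) :
    padicValInt p (∏ j ∈ Finset.Icc 1 m, (v * (j : ℤ) + u)) = 1 := by
  haveI : Fact p.Prime := ⟨hp⟩
  obtain ⟨i, hi1, him, hpu⟩ := hpi
  have hiM : i ∈ Finset.Icc 1 m := Finset.mem_Icc.mpr ⟨hi1, him⟩
  have hpZ : Prime (p : ℤ) := Nat.prime_iff_prime_int.mp hp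
  have hpPos : (0 : ℤ) < p := Int.natCast_pos.mpr hp.pos
  set Q := ∏ j ∈ (Finset.Icc 1 m).erase i, (v * (j : ℤ) + u) with hQdef
  have key : (∏ j ∈ Finset.Icc 1 m, (v * (j : ℤ) + u)) = (p : ℤ) * Q := by
    rw [← Finset.mul_prod_erase _ _ hiM, ← hpu]
  have hndvd : ∀ j ∈ (Finset.Icc 1 m).erase i, ¬ (p : ℤ) ∣ (v * (j : ℤ) + u) := by
    intro j hj hdvd
    obtain ⟨hji, hjm⟩ := Finset.mem_erase.mp hj
    obtain ⟨hj1, hjm'⟩ := Finset.mem_Icc.mp hjm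
    have hjne : (j : ℤ) ≠ (i : ℤ) := by exact_mod_cast fun h => hji (by exact_mod_cast h)
    have hdvd2 : (p : ℤ) ∣ v * ((j : ℤ) - i) := by
      have : v * ((j : ℤ) - i) = (v * (j : ℤ) + u) - p := by rw [hpu]; ring
      rw [this]
      exact dvd_sub hdvd dvd_rfl
    have hpd : (p : ℤ) ∣ ((j : ℤ) - i) := (hpZ.dvd_mul.mp hdvd2).resolve_left hpv
    obtain ⟨k, hk⟩ : (p : ℤ) ∣ v * ((j : ℤ) - i) := hdvd2
    -- bounds on v*(j-i) = t_j - p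
    have hlow : -(p : ℤ) < v * (j : ℤ) + u := by
      have h1 : v * 1 + u ≤ v * (j : ℤ) + u := by
        have : (1 : ℤ) ≤ (j : ℤ) := by exact_mod_cast hj1
        nlinarith
      linarith
    have hhigh : v * (j : ℤ) + u < 2 * p := by
      have h1 : v * (j : ℤ) + u ≤ v * (m : ℤ) + u := by
        have : (j : ℤ) ≤ (m : ℤ) := by exact_mod_cast hjm'
        nlinarith
      linarith
    have hne0 : v * (j : ℤ) + u ≠ 0 := hne j hj1 hjm'
    have hnep : v * (j : ℤ) + u ≠ (p : ℤ) := by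
      intro h
      have : v * ((j : ℤ) - i) = 0 := by
        have e : v * ((j : ℤ) - i) = (v * (j : ℤ) + u) - (v * (i : ℤ) + u) := by ring
        rw [e, h, ← hpu, sub_self]
      rcases mul_eq_zero.mp this with h' | h'
      · exact absurd h' (ne_of_gt hv)
      · exact hjne (by linarith [sub_eq_zero.mp h'])
    -- v*(j-i) = k*p with -2p < kp < p, kp ≠ -p, kp ≠ 0
    have hvd : v * ((j : ℤ) - i) = v * (j : ℤ) + u - p := by rw [hpu]; ring
    have hk1 : -2 * (p : ℤ) < (p : ℤ) * k := by rw [← hk, hvd]; linarith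
    have hk2 : (p : ℤ) * k < p := by rw [← hk, hvd]; linarith
    have hk3 : (p : ℤ) * k ≠ -p := by
      rw [← hk, hvd]; intro h; exact hne0 (by linarith)
    have hk4 : (p : ℤ) * k ≠ 0 := by
      rw [← hk, hvd]; intro h; exact hnep (by linarith)
    have hkm2 : -2 < k := by nlinarith
    have hkl : k < 1 := by nlinarith
    interval_cases k
    · exact hk3 (by ring)
    · exact hk4 (by ring)
  have hQne : Q ≠ 0 := by
    rw [hQdef]
    apply Finset.prod_ne_zero_iff.mpr
    intro j hj
    obtain ⟨hj1, hjm'⟩ := Finset.mem_Icc.mp (Finset.mem_of_mem_erase hj)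
    exact hne j hj1 hjm'
  have hQnd : ¬ (p : ℤ) ∣ Q := by
    intro h
    obtain ⟨j, hj, hd⟩ := hpZ.exists_mem_finset_dvd h
    exact hndvd j hj hd
  rw [key, padicValInt.mul (by exact_mod_cast hp.pos.ne' : (p:ℤ) ≠ 0) hQne,
    padicValInt_self, padicValInt.eq_zero_of_not_dvd hQnd]
end
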